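/- arXiv:2501.07446 — 9 statements merged into one kernel-verified Lean document; each statement's English description precedes it below -/
import Mathlib

section
/- Let ε > 0, let μ ∈ P₂(ℝ^d), let ν be a σ-subgaussian probability measure on ℝ^d for some σ > 0, and let g : ℝ^d → ℝ be a measurable function satisfying g(y) ≤ ½∫‖z−y‖² dμ(z) for all y ∈ ℝ^d. Define w(x,y) := exp((−½‖x−y‖² + g(y))/ε). Then for every x ∈ ℝ^d the integral D(x) := ∫ w(x,y) dν(y) is finite and strictly positive, the vector-valued integral N(x) := ∫ y·w(x,y) dν(y) is well defined, and the function f(x) := −ε·log D(x) is differentiable at every x ∈ ℝ^d with gradient ∇f(x) = x − T(x), where T(x) := N(x)/D(x). -/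
open MeasureTheory ENNReal
open scoped RealInnerProductSpace

/-- `μ ∈ P₂(ℝ^d)`: a Borel probability measure with finite second moment. -/
def MemP2 {d : ℕ} (μ : Measure (EuclideanSpace ℝ (Fin d))) : Prop :=
  IsProbabilityMeasure μ ∧ Integrable (fun x => ‖x‖ ^ 2) μ

/-- `μ` is a `σ`-subgaussian probability measure on `ℝ^d`. -/
def IsSubgaussian {d : ℕ} (σ : ℝ) (μ : Measure (EuclideanSpace ℝ (Fin d))) : Prop :=
  IsProbabilityMeasure μ ∧ ∀ v : EuclideanSpace ℝ (Fin d), ‖v‖ = 1 →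
    ∫⁻ x, ENNReal.ofReal (Real.exp (⟪x, v⟫ ^ 2 / σ ^ 2)) ∂μ ≤ 2

/-! Bounding `‖z - y‖ ≤ ‖z‖ + ‖y‖` inside the hypothesis on `g` gives
`g y ≤ a + b ‖y‖ + ‖y‖² / 2` with `a, b` finite moments of `μ`. The quadratic term cancels against
`-½ ‖x - y‖² ≤ -½ (‖x‖ - ‖y‖)²`, so `w(x, y) ≤ e^{a/ε} e^{(‖x‖ + b) ‖y‖ / ε}` grows at most
exponentially in `‖y‖`, locally uniformly in `x`. A `σ`-subgaussian measure integrates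
`exp (‖y‖² / ((d + 1) σ²))`, hence every `exp (c ‖y‖)`; this dominates `w`, `y w` and
`∂ₓ w = -ε⁻¹ w (x - y)` on unit balls, so `D` is differentiated under the integral sign and the
chain rule gives `∇(-ε log D) = -ε D⁻¹ ∇D = x - N / D`. -/

theorem integral_norm_sub_sq_le {E : Type*} [NormedAddCommGroup E] [MeasurableSpace E]
    {μ : Measure E} [IsProbabilityMeasure μ] (h1 : Integrable (fun z => ‖z‖) μ)
    (h2 : Integrable (fun z => ‖z‖ ^ 2) μ) (y : E) :
    ∫ z, ‖z - y‖ ^ 2 ∂μ ≤ ∫ z, ‖z‖ ^ 2 ∂μ + 2 * ‖y‖ * ∫ z, ‖z‖ ∂μ + ‖y‖ ^ 2 := by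
  have h21 : Integrable (fun z => ‖z‖ ^ 2 + 2 * ‖y‖ * ‖z‖) μ := h2.add (h1.const_mul _)
  have hint : Integrable (fun z => ‖z‖ ^ 2 + 2 * ‖y‖ * ‖z‖ + ‖y‖ ^ 2) μ :=
    h21.add (integrable_const _)
  calc ∫ z, ‖z - y‖ ^ 2 ∂μ ≤ ∫ z, ‖z‖ ^ 2 + 2 * ‖y‖ * ‖z‖ + ‖y‖ ^ 2 ∂μ := by
        refine integral_mono_of_nonneg (ae_of_all _ fun z => by positivity) hint
          (ae_of_all _ fun z => ?_)
        nlinarith [norm_sub_le z y, norm_nonneg (z - y), norm_nonneg z, norm_nonneg y]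
    _ = ∫ z, ‖z‖ ^ 2 ∂μ + 2 * ‖y‖ * ∫ z, ‖z‖ ∂μ + ‖y‖ ^ 2 := by
        rw [integral_add h21 (integrable_const _),
          integral_add h2 (h1.const_mul _), integral_const_mul, integral_const, probReal_univ,
          one_smul]

theorem MemP2.integrable_norm {d : ℕ} {μ : Measure (EuclideanSpace ℝ (Fin d))} (hμ : MemP2 μ) :
    Integrable (fun z => ‖z‖) μ := by
  have := hμ.1
  exact ((memLp_two_iff_integrable_sq_norm aestronglyMeasurable_id).2 hμ.2).integrable
    one_le_two |>.norm

theorem exp_sq_norm_div_le_one_add_sum {d : ℕ} {σ : ℝ} (hσ : 0 < σ)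
    (y : EuclideanSpace ℝ (Fin d)) :
    Real.exp (‖y‖ ^ 2 / ((d + 1) * σ ^ 2)) ≤ 1 + ∑ i, Real.exp (y i ^ 2 / σ ^ 2) := by
  rcases isEmpty_or_nonempty (Fin d) with hd | hd
  · simp [EuclideanSpace.norm_sq_eq]
  obtain ⟨i₀, -, hi₀⟩ :=
    Finset.exists_max_image Finset.univ (fun i => y i ^ 2) Finset.univ_nonempty
  have hnorm : ‖y‖ ^ 2 ≤ d * y i₀ ^ 2 :=
    calc ‖y‖ ^ 2 = ∑ i, y i ^ 2 := by simp [EuclideanSpace.norm_sq_eq]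
      _ ≤ ∑ _i : Fin d, y i₀ ^ 2 := Finset.sum_le_sum fun i _ => hi₀ i (Finset.mem_univ i)
      _ = d * y i₀ ^ 2 := by simp
  calc Real.exp (‖y‖ ^ 2 / ((d + 1) * σ ^ 2)) ≤ Real.exp (y i₀ ^ 2 / σ ^ 2) := by
        rw [Real.exp_le_exp, div_le_div_iff₀ (by positivity) (by positivity)]
        nlinarith [sq_nonneg (y i₀), sq_nonneg σ]
    _ ≤ ∑ i, Real.exp (y i ^ 2 / σ ^ 2) :=
        Finset.single_le_sum (f := fun i => Real.exp (y i ^ 2 / σ ^ 2))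
          (fun i _ => (Real.exp_pos _).le) (Finset.mem_univ i₀)
    _ ≤ 1 + ∑ i, Real.exp (y i ^ 2 / σ ^ 2) := by linarith

namespace IsSubgaussian

variable {d : ℕ} {σ : ℝ} {ν : Measure (EuclideanSpace ℝ (Fin d))}

theorem integrable_exp_inner_sq (hν : IsSubgaussian σ ν) {v : EuclideanSpace ℝ (Fin d)}
    (hv : ‖v‖ = 1) : Integrable (fun x => Real.exp (⟪x, v⟫ ^ 2 / σ ^ 2)) ν := by
  refine ⟨by fun_prop, ?_⟩
  rw [hasFiniteIntegral_iff_ofReal (ae_of_all _ fun x => (Real.exp_pos _).le)]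
  exact (hν.2 v hv).trans_lt ofNat_lt_top

theorem integrable_exp_sq_norm (hσ : 0 < σ) (hν : IsSubgaussian σ ν) :
    Integrable (fun y => Real.exp (‖y‖ ^ 2 / ((d + 1) * σ ^ 2))) ν := by
  have := hν.1
  have hcoord (i : Fin d) : Integrable (fun y => Real.exp (y i ^ 2 / σ ^ 2)) ν := by
    simpa [EuclideanSpace.inner_single_right] using
      hν.integrable_exp_inner_sq (v := EuclideanSpace.single i 1) (by simp)
  refine ((integrable_const 1).add (integrable_finsetSum Finset.univ fun i _ => hcoord i)).mono'
    (by fun_prop) (ae_of_all _ fun y => ?_)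
  rw [Real.norm_of_nonneg (Real.exp_pos _).le]
  exact exp_sq_norm_div_le_one_add_sum hσ y

end IsSubgaussian

section ExponentialMoments

variable {E : Type*} [NormedAddCommGroup E] [MeasurableSpace E] [OpensMeasurableSpace E]
  {ν : Measure E}

theorem integrable_exp_mul_norm_of_integrable_exp_sq_norm {s : ℝ} (hs : 0 < s)
    (hν : Integrable (fun y => Real.exp (‖y‖ ^ 2 / s)) ν) (c : ℝ) :
    Integrable (fun y => Real.exp (c * ‖y‖)) ν := by
  refine (hν.const_mul (Real.exp (c ^ 2 * s / 4))).mono' (by fun_prop)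
    (ae_of_all _ fun y => ?_)
  rw [Real.norm_of_nonneg (Real.exp_pos _).le, ← Real.exp_add, Real.exp_le_exp]
  -- Young's inequality `c t ≤ c² s / 4 + t² / s`
  have hyoung : c * ‖y‖ * s ≤ c ^ 2 * s ^ 2 / 4 + ‖y‖ ^ 2 := by
    nlinarith [sq_nonneg (2 * ‖y‖ - c * s)]
  rw [div_add_div _ _ (by norm_num) hs.ne', le_div_iff₀ (by positivity)]
  nlinarith

theorem integrable_norm_mul_exp_mul_norm
    (hν : ∀ c, Integrable (fun y => Real.exp (c * ‖y‖)) ν) (c : ℝ) :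
    Integrable (fun y => ‖y‖ * Real.exp (c * ‖y‖)) ν := by
  refine (hν (1 + c)).mono' (by fun_prop) (ae_of_all _ fun y => ?_)
  rw [Real.norm_of_nonneg (by positivity), add_mul, one_mul, Real.exp_add]
  gcongr
  linarith [Real.add_one_le_exp ‖y‖]

end ExponentialMoments

section EntropicWeight

variable {E : Type*} [NormedAddCommGroup E]

noncomputable def entropicWeight (ε : ℝ) (g : E → ℝ) (x y : E) : ℝ :=
  Real.exp ((-(1 / 2) * ‖x - y‖ ^ 2 + g y) / ε)

variable {ε a b : ℝ} {g : E → ℝ}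

theorem entropicWeight_pos (x y : E) : 0 < entropicWeight ε g x y :=
  Real.exp_pos _

theorem entropicWeight_le (hε : 0 < ε) (hg : ∀ y, g y ≤ a + b * ‖y‖ + ‖y‖ ^ 2 / 2) (x y : E) :
    entropicWeight ε g x y ≤ Real.exp (a / ε) * Real.exp ((‖x‖ + b) / ε * ‖y‖) := by
  have hexponent : -(1 / 2) * ‖x - y‖ ^ 2 + g y ≤ a + (‖x‖ + b) * ‖y‖ := by
    have hsq : (‖x‖ - ‖y‖) ^ 2 ≤ ‖x - y‖ ^ 2 := by
      simpa only [sq_abs] using pow_le_pow_left₀ (abs_nonneg _) (abs_norm_sub_norm_le x y) 2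
    nlinarith [hg y, sq_nonneg ‖x‖]
  rw [entropicWeight, ← Real.exp_add, Real.exp_le_exp, div_mul_eq_mul_div, ← add_div]
  gcongr

theorem entropicWeight_mul_norm_sub_le (hε : 0 < ε)
    (hg : ∀ y, g y ≤ a + b * ‖y‖ + ‖y‖ ^ 2 / 2) {r : ℝ} {x : E} (hx : ‖x‖ ≤ r) (y : E) :
    entropicWeight ε g x y * ‖x - y‖ ≤
      Real.exp (a / ε) *
        (r * Real.exp ((r + b) / ε * ‖y‖) + ‖y‖ * Real.exp ((r + b) / ε * ‖y‖)) := by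
  calc entropicWeight ε g x y * ‖x - y‖
      ≤ Real.exp (a / ε) * Real.exp ((r + b) / ε * ‖y‖) * (r + ‖y‖) := by
        gcongr
        · exact (entropicWeight_le hε hg x y).trans (by gcongr)
        · exact (norm_sub_le x y).trans (by gcongr)
    _ = Real.exp (a / ε) *
          (r * Real.exp ((r + b) / ε * ‖y‖) + ‖y‖ * Real.exp ((r + b) / ε * ‖y‖)) := by
      ring

variable [MeasurableSpace E] [BorelSpace E] {ν : Measure E}

theorem measurable_entropicWeight (hgm : Measurable g) (x : E) :
    Measurable (entropicWeight ε g x) := by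
  unfold entropicWeight
  fun_prop

theorem integrable_entropicWeight (hε : 0 < ε) (hg : ∀ y, g y ≤ a + b * ‖y‖ + ‖y‖ ^ 2 / 2)
    (hgm : Measurable g) (hν : ∀ c, Integrable (fun y => Real.exp (c * ‖y‖)) ν) (x : E) :
    Integrable (entropicWeight ε g x) ν :=
  ((hν _).const_mul _).mono' (measurable_entropicWeight hgm x).aestronglyMeasurable
    (ae_of_all _ fun y => (Real.norm_of_nonneg (entropicWeight_pos x y).le).trans_le
      (entropicWeight_le hε hg x y))

theorem integrable_entropicWeight_smul [NormedSpace ℝ E] [SecondCountableTopology E]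
    (hε : 0 < ε) (hg : ∀ y, g y ≤ a + b * ‖y‖ + ‖y‖ ^ 2 / 2) (hgm : Measurable g)
    (hν : ∀ c, Integrable (fun y => Real.exp (c * ‖y‖)) ν) (x : E) :
    Integrable (fun y => entropicWeight ε g x y • y) ν := by
  refine ((integrable_norm_mul_exp_mul_norm hν ((‖x‖ + b) / ε)).const_mul
    (Real.exp (a / ε))).mono'
    ((measurable_entropicWeight hgm x).aestronglyMeasurable.smul aestronglyMeasurable_id)
    (ae_of_all _ fun y => ?_)
  rw [norm_smul, Real.norm_of_nonneg (entropicWeight_pos x y).le]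
  calc entropicWeight ε g x y * ‖y‖
      ≤ Real.exp (a / ε) * Real.exp ((‖x‖ + b) / ε * ‖y‖) * ‖y‖ := by
        gcongr
        exact entropicWeight_le hε hg x y
    _ = Real.exp (a / ε) * (‖y‖ * Real.exp ((‖x‖ + b) / ε * ‖y‖)) := by ring

end EntropicWeight

section Gradient

variable {E : Type*} [NormedAddCommGroup E] [InnerProductSpace ℝ E] {ε a b : ℝ} {g : E → ℝ}

theorem hasFDerivAt_entropicWeight (x y : E) :
    HasFDerivAt (fun x => entropicWeight ε g x y)
      (-ε⁻¹ • innerSL ℝ (entropicWeight ε g x y • (x - y))) x := by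
  have hsq := ((hasFDerivAt_id x).sub_const y).norm_sq
  convert (((hsq.const_mul (-(1 / 2))).add_const (g y)).mul_const ε⁻¹).exp using 1
  · simp only [entropicWeight, id, div_eq_mul_inv]
  ext u
  simp only [entropicWeight, div_eq_mul_inv, smul_apply, ContinuousLinearMap.comp_apply,
    ContinuousLinearMap.id_apply, innerSL_apply_apply, real_inner_smul_left, id, smul_eq_mul,
    nsmul_eq_mul, Nat.cast_ofNat]
  ring

variable [CompleteSpace E] [SecondCountableTopology E] [MeasurableSpace E] [BorelSpace E]
  {ν : Measure E}

theorem hasFDerivAt_integral_entropicWeight (hε : 0 < ε)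
    (hg : ∀ y, g y ≤ a + b * ‖y‖ + ‖y‖ ^ 2 / 2) (hgm : Measurable g)
    (hν : ∀ c, Integrable (fun y => Real.exp (c * ‖y‖)) ν) (x : E) :
    HasFDerivAt (fun x => ∫ y, entropicWeight ε g x y ∂ν)
      (-ε⁻¹ • innerSL ℝ (∫ y, entropicWeight ε g x y • (x - y) ∂ν)) x := by
  have hint : Integrable (fun y => entropicWeight ε g x y • (x - y)) ν := by
    refine (((integrable_entropicWeight hε hg hgm hν x).smul_const x).sub
      (integrable_entropicWeight_smul hε hg hgm hν x)).congr (ae_of_all _ fun y => ?_)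
    exact (smul_sub _ _ _).symm
  set r := ‖x‖ + 1
  have hbound : ∀ y, ∀ x' ∈ Metric.ball x 1,
      ‖-ε⁻¹ • innerSL ℝ (entropicWeight ε g x' y • (x' - y))‖ ≤
        ε⁻¹ * (Real.exp (a / ε) *
          (r * Real.exp ((r + b) / ε * ‖y‖) + ‖y‖ * Real.exp ((r + b) / ε * ‖y‖))) := by
    intro y x' hx'
    have hx'r : ‖x'‖ ≤ r := by
      linarith [norm_le_norm_add_norm_sub' x' x, (mem_ball_iff_norm.1 hx').le]
    rw [norm_smul, innerSL_apply_norm, norm_smul, norm_neg, norm_inv, Real.norm_of_nonneg hε.le,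
      Real.norm_of_nonneg (entropicWeight_pos x' y).le]
    exact mul_le_mul_of_nonneg_left (entropicWeight_mul_norm_sub_le hε hg hx'r y) (by positivity)
  have hbound_int : Integrable (fun y => ε⁻¹ * (Real.exp (a / ε) *
      (r * Real.exp ((r + b) / ε * ‖y‖) + ‖y‖ * Real.exp ((r + b) / ε * ‖y‖)))) ν :=
    ((((hν _).const_mul r).add (integrable_norm_mul_exp_mul_norm hν _)).const_mul _).const_mul _
  have hderiv := hasFDerivAt_integral_of_dominated_of_fderiv_le (Metric.ball_mem_nhds x one_pos)
    (.of_forall fun x' => (measurable_entropicWeight hgm x').aestronglyMeasurable)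
    (integrable_entropicWeight hε hg hgm hν x)
    (((innerSL ℝ).continuous.comp_aestronglyMeasurable hint.aestronglyMeasurable).fun_const_smul _)
    (ae_of_all _ hbound) hbound_int
    (ae_of_all _ fun y x' _ => hasFDerivAt_entropicWeight x' y)
  rwa [integral_smul, ContinuousLinearMap.integral_comp_comm _ hint] at hderiv

theorem hasGradientAt_neg_mul_log_integral_entropicWeight [NeZero ν] (hε : 0 < ε)
    (hg : ∀ y, g y ≤ a + b * ‖y‖ + ‖y‖ ^ 2 / 2) (hgm : Measurable g)
    (hν : ∀ c, Integrable (fun y => Real.exp (c * ‖y‖)) ν) (x : E) :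
    HasGradientAt (fun x => -ε * Real.log (∫ y, entropicWeight ε g x y ∂ν))
      (x - (∫ y, entropicWeight ε g x y ∂ν)⁻¹ • ∫ y, entropicWeight ε g x y • y ∂ν) x := by
  have hD := integrable_entropicWeight hε hg hgm hν x
  have hN := integrable_entropicWeight_smul hε hg hgm hν x
  set D := ∫ y, entropicWeight ε g x y ∂ν
  set N := ∫ y, entropicWeight ε g x y • y ∂ν
  have hDpos : 0 < D := integral_exp_pos hD
  have hDN : ∫ y, entropicWeight ε g x y • (x - y) ∂ν = D • x - N := by
    simp_rw [smul_sub]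
    rw [integral_sub (hD.smul_const x) hN, integral_smul_const]
  rw [hasGradientAt_iff_hasFDerivAt]
  refine (((hasFDerivAt_integral_entropicWeight hε hg hgm hν x).log hDpos.ne').const_mul
    (-ε)).congr_fderiv ?_
  ext u
  simp only [hDN, smul_apply, innerSL_apply_apply,
    InnerProductSpace.toDual_apply_apply, inner_sub_left, real_inner_smul_left, smul_eq_mul]
  field_simp
  exact mul_div_cancel_left₀ _ hDpos.ne'

end Gradient

/-- Smoothness of the entropic potential: with `w(x,y) = exp((−½‖x−y‖² + g(y))/ε)`,
the normalizing integral `D(x) = ∫ w(x,y) dν(y)` is finite and positive, the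
vector-valued integral `N(x) = ∫ y·w(x,y) dν(y)` is well defined, and
`f(x) = −ε log D(x)` has gradient `x − N(x)/D(x)` at every point. -/
theorem entropic_potential_gradient
    {d : ℕ} (ε σ : ℝ) (hε : 0 < ε) (hσ : 0 < σ)
    (μ ν : Measure (EuclideanSpace ℝ (Fin d))) (hμ : MemP2 μ) (hν : IsSubgaussian σ ν)
    (g : EuclideanSpace ℝ (Fin d) → ℝ) (hgm : Measurable g)
    (hg : ∀ y, g y ≤ (1 / 2) * ∫ z, ‖z - y‖ ^ 2 ∂μ) :
    (∀ x, Integrable (fun y => Real.exp ((-(1 / 2) * ‖x - y‖ ^ 2 + g y) / ε)) ν) ∧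
    (∀ x, 0 < ∫ y, Real.exp ((-(1 / 2) * ‖x - y‖ ^ 2 + g y) / ε) ∂ν) ∧
    (∀ x, Integrable (fun y => Real.exp ((-(1 / 2) * ‖x - y‖ ^ 2 + g y) / ε) • y) ν) ∧
    (∀ x, HasGradientAt
      (fun x' => -ε * Real.log (∫ y, Real.exp ((-(1 / 2) * ‖x' - y‖ ^ 2 + g y) / ε) ∂ν))
      (x - (∫ y, Real.exp ((-(1 / 2) * ‖x - y‖ ^ 2 + g y) / ε) ∂ν)⁻¹ •
        ∫ y, Real.exp ((-(1 / 2) * ‖x - y‖ ^ 2 + g y) / ε) • y ∂ν) x) := by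
  have : IsProbabilityMeasure μ := hμ.1
  have : IsProbabilityMeasure ν := hν.1
  have hgrowth : ∀ y, g y ≤ (∫ z, ‖z‖ ^ 2 ∂μ) / 2 + (∫ z, ‖z‖ ∂μ) * ‖y‖ + ‖y‖ ^ 2 / 2 := by
    intro y
    linarith [hg y, integral_norm_sub_sq_le hμ.integrable_norm hμ.2 y]
  have hexp : ∀ c, Integrable (fun y => Real.exp (c * ‖y‖)) ν :=
    integrable_exp_mul_norm_of_integrable_exp_sq_norm (by positivity)
      (hν.integrable_exp_sq_norm hσ)
  have hD := integrable_entropicWeight hε hgrowth hgm hexp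
  exact ⟨hD, fun x => integral_exp_pos (hD x),
    integrable_entropicWeight_smul hε hgrowth hgm hexp,
    hasGradientAt_neg_mul_log_integral_entropicWeight hε hgrowth hgm hexp⟩
end

section
/- Let F : P₂(ℝ^d) → ℝ be convex, i.e. F((1−t)μ + tρ) ≤ (1−t)F(μ) + tF(ρ) for all μ, ρ ∈ P₂(ℝ^d) and t ∈ [0,1]. Suppose F admits a derivative δ at some μ* ∈ P₂(ℝ^d), that δ : ℝ^d → ℝ is continuously differentiable, that ∇δ(x) = 0 for μ*-almost every x, and that supp(μ*) = ℝ^d. Then μ* minimizes F over P₂(ℝ^d): F(μ*) ≤ F(μ) for every μ ∈ P₂(ℝ^d). -/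
/-!
Along the segment `t ↦ (1 - t) μ* + t μ`, convexity bounds the difference quotient of `F`
at `t = 0` by `F μ - F μ*`, and that quotient tends to `∫ δ dμ - ∫ δ dμ*`. The gradient of `δ`
is continuous and vanishes `μ*`-a.e.; since `μ*` charges every nonempty open set, it vanishes
everywhere, so `δ` is constant and the two integrals agree. Hence `0 ≤ F μ - F μ*`.
-/

open MeasureTheory ENNReal Filter
open scoped Topology

section Gradient

variable {E : Type*} [NormedAddCommGroup E] [InnerProductSpace ℝ E] [CompleteSpace E]
  {f : E → ℝ}

theorem ContDiff.continuous_gradient (hf : ContDiff ℝ 1 f) : Continuous (gradient f) :=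
  (InnerProductSpace.toDual ℝ E).symm.continuous.comp (hf.continuous_fderiv one_ne_zero)

theorem is_const_of_gradient_eq_zero (hf : Differentiable ℝ f) (h : gradient f = 0) (x y : E) :
    f x = f y :=
  is_const_of_fderiv_eq_zero hf
    (fun z => by rw [← toDual_gradient, h, Pi.zero_apply, map_zero]) x y

end Gradient

theorem le_sub_of_tendsto_slope_of_le_convexComb {g : ℝ → ℝ} {a b L : ℝ}
    (hg : ∀ t ∈ Set.Ioo (0 : ℝ) 1, g t ≤ (1 - t) * a + t * b)
    (hL : Tendsto (fun t => (g t - a) / t) (𝓝[>] 0) (𝓝 L)) : L ≤ b - a := by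
  refine le_of_tendsto hL ?_
  filter_upwards [Ioo_mem_nhdsGT (show (0 : ℝ) < 1 from one_pos)] with t ht
  rw [div_le_iff₀ ht.1]
  linarith [hg t ht]

theorem critical_point_full_support_is_minimizer_general
    {d : ℕ} (F : Measure (EuclideanSpace ℝ (Fin d)) → ℝ)
    (hconv : ∀ μ ρ : Measure (EuclideanSpace ℝ (Fin d)), MemP2 μ → MemP2 ρ →
      ∀ t : ℝ, 0 ≤ t → t ≤ 1 →
        F (ENNReal.ofReal (1 - t) • μ + ENNReal.ofReal t • ρ)
          ≤ (1 - t) * F μ + t * F ρ)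
    (μstar : Measure (EuclideanSpace ℝ (Fin d))) (hμstar : MemP2 μstar)
    (δ : EuclideanSpace ℝ (Fin d) → ℝ)
    (hderiv : ∀ ρ : Measure (EuclideanSpace ℝ (Fin d)), MemP2 ρ →
      Tendsto
        (fun t : ℝ =>
          (F (ENNReal.ofReal (1 - t) • μstar + ENNReal.ofReal t • ρ) - F μstar) / t)
        (𝓝[>] (0 : ℝ)) (𝓝 ((∫ x, δ x ∂ρ) - ∫ x, δ x ∂μstar)))
    (hδC1 : ContDiff ℝ 1 δ)
    (hcrit : ∀ᵐ x ∂μstar, gradient δ x = 0)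
    (hsupp : ∀ U : Set (EuclideanSpace ℝ (Fin d)), IsOpen U → U.Nonempty → μstar U ≠ 0) :
    ∀ μ : Measure (EuclideanSpace ℝ (Fin d)), MemP2 μ → F μstar ≤ F μ := by
  intro μ hμ
  have : μstar.IsOpenPosMeasure := ⟨hsupp⟩
  have hgrad : gradient δ = 0 :=
    (hδC1.continuous_gradient.ae_eq_iff_eq μstar continuous_const).mp hcrit
  have hconst (x : EuclideanSpace ℝ (Fin d)) : δ x = δ 0 :=
    is_const_of_gradient_eq_zero (hδC1.differentiable one_ne_zero) hgrad x 0
  have : IsProbabilityMeasure μ := hμ.1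
  have : IsProbabilityMeasure μstar := hμstar.1
  have hlim := hderiv μ hμ
  simp only [hconst, integral_const, probReal_univ, one_smul, sub_self] at hlim
  exact sub_nonneg.mp <| le_sub_of_tendsto_slope_of_le_convexComb
    (fun t ht => hconv μstar μ hμstar hμ t ht.1.le ht.2.le) hlim

/-- A critical point (vanishing gradient of the derivative, `μ*`-a.e.) of a convex
functional with full support is a global minimizer over `P₂(ℝ^d)`. -/
theorem critical_point_full_support_is_minimizer
    {d : ℕ} (F : Measure (EuclideanSpace ℝ (Fin d)) → ℝ)
    (hconv : ∀ μ ρ : Measure (EuclideanSpace ℝ (Fin d)), MemP2 μ → MemP2 ρ →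
      ∀ t : ℝ, 0 ≤ t → t ≤ 1 →
        F (ENNReal.ofReal (1 - t) • μ + ENNReal.ofReal t • ρ)
          ≤ (1 - t) * F μ + t * F ρ)
    (μstar : Measure (EuclideanSpace ℝ (Fin d))) (hμstar : MemP2 μstar)
    (δ : EuclideanSpace ℝ (Fin d) → ℝ)
    (hδcont : Continuous δ)
    (hδint : Integrable δ μstar) (hδint' : ∀ ρ, MemP2 ρ → Integrable δ ρ)
    (hderiv : ∀ ρ : Measure (EuclideanSpace ℝ (Fin d)), MemP2 ρ →
      Tendsto
        (fun t : ℝ =>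
          (F (ENNReal.ofReal (1 - t) • μstar + ENNReal.ofReal t • ρ) - F μstar) / t)
        (𝓝[>] (0 : ℝ)) (𝓝 ((∫ x, δ x ∂ρ) - ∫ x, δ x ∂μstar)))
    (hδC1 : ContDiff ℝ 1 δ)
    (hcrit : ∀ᵐ x ∂μstar, gradient δ x = 0)
    (hsupp : ∀ U : Set (EuclideanSpace ℝ (Fin d)), IsOpen U → U.Nonempty → μstar U ≠ 0) :
    ∀ μ : Measure (EuclideanSpace ℝ (Fin d)), MemP2 μ → F μstar ≤ F μ :=
  critical_point_full_support_is_minimizer_general F hconv μstar hμstar δ hderiv hδC1 hcrit hsupp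
end

section
/- Let μ ∈ P₂(ℝ^d), let ν₁,…,ν_m ∈ P₂(ℝ^d), let λ ∈ Δ^m, and let T₁,…,T_m : ℝ^d → ℝ^d be measurable maps such that the pushforward (T_j)_#μ ≤_c ν_j for each 1 ≤ j ≤ m, and such that the pushforward of μ under x ↦ ∑_{j=1}^m λ_j T_j(x) equals μ. Then μ ≤_c ∑_{j=1}^m λ_j ν_j, where ∑_j λ_j ν_j denotes the mixture measure. -/
open MeasureTheory ENNReal

/-- Convex order: `μ ≤_c ν` iff `∫ φ dμ ≤ ∫ φ dν` (as integrals in `[0,∞]`)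
for every convex `φ : ℝ^d → [0,∞)`. -/
def ConvexOrder {d : ℕ} (μ ν : Measure (EuclideanSpace ℝ (Fin d))) : Prop :=
  ∀ φ : EuclideanSpace ℝ (Fin d) → ℝ, ConvexOn ℝ Set.univ φ → (∀ x, 0 ≤ φ x) →
    ∫⁻ x, ENNReal.ofReal (φ x) ∂μ ≤ ∫⁻ x, ENNReal.ofReal (φ x) ∂ν

/-! The fixed-point identity `μ = (∑ λ_j T_j)_#μ` and Jensen's inequality give
`μ ≤_c ∑ λ_j (T_j)_#μ`; mixing the comparisons `(T_j)_#μ ≤_c ν_j` with weights `λ_j` then gives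
`∑ λ_j (T_j)_#μ ≤_c ∑ λ_j ν_j`. -/

theorem ConvexOn.ofReal_map_sum_le {E ι : Type*} [AddCommGroup E] [Module ℝ E] {s : Set E}
    {φ : E → ℝ} (hφ : ConvexOn ℝ s φ) {t : Finset ι} {w : ι → ℝ} {x : ι → E}
    (hw0 : ∀ i ∈ t, 0 ≤ w i) (hw1 : ∑ i ∈ t, w i = 1) (hx : ∀ i ∈ t, x i ∈ s)
    (hφ0 : ∀ i ∈ t, 0 ≤ φ (x i)) :
    ENNReal.ofReal (φ (∑ i ∈ t, w i • x i)) ≤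
      ∑ i ∈ t, ENNReal.ofReal (w i) * ENNReal.ofReal (φ (x i)) := by
  calc ENNReal.ofReal (φ (∑ i ∈ t, w i • x i))
      ≤ ENNReal.ofReal (∑ i ∈ t, w i * φ (x i)) :=
        ENNReal.ofReal_le_ofReal (hφ.map_sum_le hw0 hw1 hx)
    _ = ∑ i ∈ t, ENNReal.ofReal (w i) * ENNReal.ofReal (φ (x i)) := by
        rw [ENNReal.ofReal_sum_of_nonneg fun i hi => mul_nonneg (hw0 i hi) (hφ0 i hi)]
        exact Finset.sum_congr rfl fun i hi => ENNReal.ofReal_mul (hw0 i hi)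

section ConvexOrder

variable {d : ℕ}

theorem ConvexOrder.trans {μ ν ρ : Measure (EuclideanSpace ℝ (Fin d))}
    (hμν : ConvexOrder μ ν) (hνρ : ConvexOrder ν ρ) : ConvexOrder μ ρ :=
  fun φ hφ hφ0 => (hμν φ hφ hφ0).trans (hνρ φ hφ hφ0)

theorem ConvexOrder.sum_smul {ι : Type*} {s : Finset ι} {c : ι → ℝ≥0∞}
    {μ ν : ι → Measure (EuclideanSpace ℝ (Fin d))} (h : ∀ i ∈ s, ConvexOrder (μ i) (ν i)) :
    ConvexOrder (∑ i ∈ s, c i • μ i) (∑ i ∈ s, c i • ν i) := by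
  intro φ hφ hφ0
  simp only [lintegral_finsetSum_measure, lintegral_smul_measure, smul_eq_mul]
  exact Finset.sum_le_sum fun i hi => mul_le_mul_right (h i hi φ hφ hφ0) _

theorem convexOrder_map_sum_smul {α ι : Type*} [MeasurableSpace α] [Fintype ι] (μ : Measure α)
    {w : ι → ℝ} (hw0 : ∀ i, 0 ≤ w i) (hw1 : ∑ i, w i = 1)
    {T : ι → α → EuclideanSpace ℝ (Fin d)} (hT : ∀ i, Measurable (T i)) :
    ConvexOrder (μ.map fun x => ∑ i, w i • T i x) (∑ i, ENNReal.ofReal (w i) • μ.map (T i)) := by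
  intro φ hφ hφ0
  have hφm : Measurable fun y => ENNReal.ofReal (φ y) :=
    ENNReal.measurable_ofReal.comp (continuousOn_univ.mp (hφ.continuousOn isOpen_univ)).measurable
  have hφT : ∀ i, Measurable fun x => ENNReal.ofReal (φ (T i x)) := fun i => hφm.comp (hT i)
  calc ∫⁻ y, ENNReal.ofReal (φ y) ∂(μ.map fun x => ∑ i, w i • T i x)
      ≤ ∫⁻ x, ENNReal.ofReal (φ (∑ i, w i • T i x)) ∂μ := lintegral_map_le _ _
    _ ≤ ∫⁻ x, ∑ i, ENNReal.ofReal (w i) * ENNReal.ofReal (φ (T i x)) ∂μ :=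
        lintegral_mono fun x => hφ.ofReal_map_sum_le (fun i _ => hw0 i) hw1
          (fun i _ => Set.mem_univ _) (fun i _ => hφ0 _)
    _ = ∫⁻ y, ENNReal.ofReal (φ y) ∂(∑ i, ENNReal.ofReal (w i) • μ.map (T i)) := by
        rw [lintegral_finsetSum _ fun i _ => (hφT i).const_mul _]
        simp only [lintegral_finsetSum_measure, lintegral_smul_measure, smul_eq_mul,
          lintegral_map hφm (hT _)]
        exact Finset.sum_congr rfl fun i _ => lintegral_const_mul _ (hφT i)

end ConvexOrder

theorem critical_point_convex_order_mixture_general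
    {d m : ℕ}
    (μ : Measure (EuclideanSpace ℝ (Fin d)))
    (ν : Fin m → Measure (EuclideanSpace ℝ (Fin d)))
    (lam : Fin m → ℝ) (hlam0 : ∀ j, 0 ≤ lam j) (hlam1 : ∑ j, lam j = 1)
    (T : Fin m → EuclideanSpace ℝ (Fin d) → EuclideanSpace ℝ (Fin d))
    (hTm : ∀ j, Measurable (T j))
    (hTc : ∀ j, ConvexOrder (μ.map (T j)) (ν j))
    (hfix : μ.map (fun x => ∑ j, lam j • T j x) = μ) :
    ConvexOrder μ (∑ j, ENNReal.ofReal (lam j) • ν j) := by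
  have hμ_mix := convexOrder_map_sum_smul μ hlam0 hlam1 hTm
  rw [hfix] at hμ_mix
  exact hμ_mix.trans (ConvexOrder.sum_smul fun j _ => hTc j)

/-- If `(T_j)_#μ ≤_c ν_j` for each `j` and `x ↦ ∑ λ_j T_j(x)` pushes `μ` forward to
itself, then `μ ≤_c ∑ λ_j ν_j`. -/
theorem critical_point_convex_order_mixture
    {d m : ℕ}
    (μ : Measure (EuclideanSpace ℝ (Fin d))) (hμ : MemP2 μ)
    (ν : Fin m → Measure (EuclideanSpace ℝ (Fin d))) (hν : ∀ j, MemP2 (ν j))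
    (lam : Fin m → ℝ) (hlam0 : ∀ j, 0 ≤ lam j) (hlam1 : ∑ j, lam j = 1)
    (T : Fin m → EuclideanSpace ℝ (Fin d) → EuclideanSpace ℝ (Fin d))
    (hTm : ∀ j, Measurable (T j))
    (hTc : ∀ j, ConvexOrder (μ.map (T j)) (ν j))
    (hfix : μ.map (fun x => ∑ j, lam j • T j x) = μ) :
    ConvexOrder μ (∑ j, ENNReal.ofReal (lam j) • ν j) :=
  critical_point_convex_order_mixture_general μ ν lam hlam0 hlam1 T hTm hTc hfix
end

section
/- Let σ > 0, let ν₁,…,ν_m be σ-subgaussian probability measures on ℝ^d, let λ ∈ Δ^m, let μ ∈ P₂(ℝ^d), and let T₁,…,T_m : ℝ^d → ℝ^d be measurable maps such that (T_j)_#μ ≤_c ν_j for each 1 ≤ j ≤ m and such that the pushforward of μ under x ↦ ∑_{j=1}^m λ_j T_j(x) equals μ. Then μ is σ-subgaussian. -/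
open MeasureTheory ENNReal
open scoped RealInnerProductSpace

/-- Composition with `exp` preserves convexity. -/
lemma exp_comp_convexOn {E : Type*} [AddCommMonoid E] [Module ℝ E] {q : E → ℝ}
    (hq : ConvexOn ℝ Set.univ q) : ConvexOn ℝ Set.univ (fun x => Real.exp (q x)) := by
  refine ⟨convex_univ, fun x _ y _ a b ha hb hab => ?_⟩
  calc Real.exp (q (a•x+b•y)) ≤ Real.exp (a * q x + b * q y) :=
        Real.exp_le_exp.2 (by simpa [smul_eq_mul] using hq.2 trivial trivial ha hb hab)
    _ ≤ a * Real.exp (q x) + b * Real.exp (q y) := by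
        simpa [smul_eq_mul] using convexOn_exp.2 (Set.mem_univ (q x)) (Set.mem_univ (q y)) ha hb hab

/-- The test function in the subgaussian condition is convex. -/
lemma subg_test_convexOn {d : ℕ} (σ : ℝ) (hσ : 0 < σ) (v : EuclideanSpace ℝ (Fin d)) :
    ConvexOn ℝ Set.univ (fun x : EuclideanSpace ℝ (Fin d) => Real.exp (⟪x, v⟫ ^ 2 / σ ^ 2)) := by
  apply exp_comp_convexOn
  have h1 : ConvexOn ℝ Set.univ (fun x : EuclideanSpace ℝ (Fin d) => ⟪x, v⟫ ^ 2) := by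
    have h := (even_two.convexOn_pow (𝕜 := ℝ)).comp_affineMap
      ((innerSL ℝ v).toLinearMap.toAffineMap)
    simp only [Set.preimage_univ, Function.comp_def, LinearMap.coe_toAffineMap,
      ContinuousLinearMap.coe_coe, innerSL_apply_apply] at h
    simpa only [real_inner_comm] using h
  have h2 := h1.smul (c := (σ ^ 2)⁻¹) (by positivity)
  simp only [smul_eq_mul] at h2
  have hfun : (fun x : EuclideanSpace ℝ (Fin d) => ⟪x, v⟫ ^ 2 / σ ^ 2)
      = fun x => (σ ^ 2)⁻¹ * ⟪x, v⟫ ^ 2 := by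
    funext x
    rw [div_eq_mul_inv, mul_comm]
  rw [hfun]
  exact h2

/-- A critical point of the entropic barycenter functional with `σ`-subgaussian
reference measures is `σ`-subgaussian. -/
theorem critical_point_is_subgaussian
    {d m : ℕ} (σ : ℝ) (hσ : 0 < σ)
    (ν : Fin m → Measure (EuclideanSpace ℝ (Fin d))) (hν : ∀ j, IsSubgaussian σ (ν j))
    (lam : Fin m → ℝ) (hlam0 : ∀ j, 0 ≤ lam j) (hlam1 : ∑ j, lam j = 1)
    (μ : Measure (EuclideanSpace ℝ (Fin d))) (hμ : MemP2 μ)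
    (T : Fin m → EuclideanSpace ℝ (Fin d) → EuclideanSpace ℝ (Fin d))
    (hTm : ∀ j, Measurable (T j))
    (hTc : ∀ j, ConvexOrder (μ.map (T j)) (ν j))
    (hfix : μ.map (fun x => ∑ j, lam j • T j x) = μ) :
    IsSubgaussian σ μ := by
  obtain ⟨hprob, -⟩ := hμ
  refine ⟨hprob, fun v hv => ?_⟩
  set φ : EuclideanSpace ℝ (Fin d) → ℝ := fun x => Real.exp (⟪x, v⟫ ^ 2 / σ ^ 2) with hφ
  have hφ0 : ∀ x, 0 ≤ φ x := fun x => (Real.exp_pos _).le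
  have hφconv : ConvexOn ℝ Set.univ φ := subg_test_convexOn σ hσ v
  have hφcont : Continuous φ := by
    apply Real.continuous_exp.comp
    exact ((continuous_id.inner continuous_const).pow 2).div_const _
  have hφmeas : Measurable fun x => ENNReal.ofReal (φ x) :=
    ENNReal.measurable_ofReal.comp hφcont.measurable
  have hSmeas : Measurable (fun x => ∑ j, lam j • T j x) := by
    apply Finset.measurable_sum
    exact fun j _ => (hTm j).const_smul (lam j)
  have key : ∫⁻ x, ENNReal.ofReal (φ x) ∂μ
      = ∫⁻ x, ENNReal.ofReal (φ (∑ j, lam j • T j x)) ∂μ := by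
    conv_lhs => rw [← hfix]
    rw [lintegral_map hφmeas hSmeas]
  -- convexity of the scalar function
  have hg : ConvexOn ℝ Set.univ (fun t : ℝ => Real.exp (t ^ 2 / σ ^ 2)) := by
    apply exp_comp_convexOn
    have h2 := (even_two.convexOn_pow (𝕜 := ℝ)).smul (c := (σ ^ 2)⁻¹) (by positivity)
    simp only [smul_eq_mul] at h2
    have hfun : (fun t : ℝ => t ^ 2 / σ ^ 2) = fun t => (σ ^ 2)⁻¹ * t ^ 2 := by
      funext t
      rw [div_eq_mul_inv, mul_comm]
    rw [hfun]
    exact h2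
  -- pointwise Jensen-type inequality
  have hpt : ∀ x, φ (∑ j, lam j • T j x) ≤ ∑ j, lam j * φ (T j x) := by
    intro x
    have h1 : ⟪(∑ j, lam j • T j x), v⟫ = ∑ j, lam j * ⟪T j x, v⟫ := by
      rw [sum_inner]
      exact Finset.sum_congr rfl fun j _ => real_inner_smul_left _ _ _
    have h2 := hg.map_sum_le (t := Finset.univ) (w := lam) (p := fun j => ⟪T j x, v⟫)
      (fun j _ => hlam0 j) hlam1 (fun j _ => Set.mem_univ _)
    simpa only [hφ, h1, smul_eq_mul] using h2
  rw [key]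
  calc ∫⁻ x, ENNReal.ofReal (φ (∑ j, lam j • T j x)) ∂μ
      ≤ ∫⁻ x, ∑ j, ENNReal.ofReal (lam j) * ENNReal.ofReal (φ (T j x)) ∂μ := by
        apply lintegral_mono
        intro x
        calc ENNReal.ofReal (φ (∑ j, lam j • T j x))
            ≤ ENNReal.ofReal (∑ j, lam j * φ (T j x)) := ENNReal.ofReal_le_ofReal (hpt x)
          _ = ∑ j, ENNReal.ofReal (lam j) * ENNReal.ofReal (φ (T j x)) := by
              rw [ENNReal.ofReal_sum_of_nonneg
                (fun j _ => mul_nonneg (hlam0 j) (hφ0 _))]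
              exact Finset.sum_congr rfl fun j _ => ENNReal.ofReal_mul (hlam0 j)
    _ = ∑ j, ∫⁻ x, ENNReal.ofReal (lam j) * ENNReal.ofReal (φ (T j x)) ∂μ :=
        lintegral_finset_sum _ (fun j _ => (hφmeas.comp (hTm j)).const_mul _)
    _ = ∑ j, ENNReal.ofReal (lam j) * ∫⁻ x, ENNReal.ofReal (φ (T j x)) ∂μ :=
        Finset.sum_congr rfl fun j _ => lintegral_const_mul _ (hφmeas.comp (hTm j))
    _ ≤ ∑ j, ENNReal.ofReal (lam j) * 2 := by
        apply Finset.sum_le_sum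
        intro j _
        gcongr
        have heq : ∫⁻ x, ENNReal.ofReal (φ (T j x)) ∂μ
            = ∫⁻ y, ENNReal.ofReal (φ y) ∂(μ.map (T j)) :=
          (lintegral_map hφmeas (hTm j)).symm
        rw [heq]
        exact (hTc j φ hφconv hφ0).trans ((hν j).2 v hv)
    _ = 2 := by
        rw [← Finset.sum_mul, ← ENNReal.ofReal_sum_of_nonneg (fun j _ => hlam0 j), hlam1]
        simp
end

section
/- Let σ > 0 and let (μ_n) be a sequence of σ-subgaussian probability measures on ℝ^d converging weakly to a probability measure μ (i.e. ∫ φ dμ_n → ∫ φ dμ for every bounded continuous φ : ℝ^d → ℝ). Then (1) μ is σ-subgaussian, and (2) for every real p ≥ 1, ∫ ‖x‖^p dμ_n(x) → ∫ ‖x‖^p dμ(x) as n → ∞. -/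
/-!
The subgaussian bound passes to the limit because `∫⁻ f dμ ≤ liminf ∫⁻ f dμₙ` for every
nonnegative continuous `f` (portmanteau), applied to `f x = exp (⟪x, v⟫² / σ²)`.

For the moments, Jensen's inequality over the `d` coordinate directions gives
`∫ exp (‖x‖² / (d σ²)) ≤ 2` for every `σ`-subgaussian measure. As `‖x‖ ^ p` is
`o(exp (‖x‖² / (d σ²)))`, the bounded continuous truncations `min (‖x‖ ^ p) M`
approximate `∫ ‖x‖ ^ p` uniformly over the `μₙ` and `μ`, and weak convergence applies
to the truncations.
-/

open MeasureTheory ENNReal Filter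
open scoped RealInnerProductSpace Topology BoundedContinuousFunction

lemma tendsto_of_forall_dist_le {α β : Type*} [PseudoMetricSpace β] {l : Filter α}
    {a : α → β} {a₀ : β}
    (h : ∀ ε > 0, ∃ b : α → β, ∃ b₀, Tendsto b l (𝓝 b₀) ∧ (∀ x, dist (a x) (b x) ≤ ε) ∧
      dist a₀ b₀ ≤ ε) :
    Tendsto a l (𝓝 a₀) := by
  refine Metric.tendsto_nhds.2 fun ε hε => ?_
  obtain ⟨b, b₀, hb, hab, hab₀⟩ := h (ε / 3) (by positivity)
  filter_upwards [Metric.tendsto_nhds.1 hb (ε / 3) (by positivity)] with x hx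
  calc dist (a x) a₀ ≤ dist (a x) (b x) + dist (b x) b₀ + dist b₀ a₀ := dist_triangle4 _ _ _ _
    _ < ε := by rw [dist_comm b₀]; linarith [hab x]

lemma abs_integral_sub_integral_min_le {X : Type*} [MeasurableSpace X] {ν : Measure X}
    [IsFiniteMeasure ν] {f g : X → ℝ} (hf : Integrable f ν) (hg : Integrable g ν) {M ε : ℝ}
    (hfg : ∀ x, f x - min (f x) M ≤ ε * g x) :
    |∫ x, f x ∂ν - ∫ x, min (f x) M ∂ν| ≤ ε * ∫ x, g x ∂ν := by
  have hmin : Integrable (fun x => min (f x) M) ν := hf.inf (integrable_const M)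
  rw [← integral_sub hf hmin, ← integral_const_mul,
    abs_of_nonneg (integral_nonneg fun x => sub_nonneg.2 (min_le_left _ _))]
  exact integral_mono (hf.sub hmin) (hg.const_mul ε) hfg

lemma lintegral_le_of_forall_tendsto_integral {X : Type*} [TopologicalSpace X]
    [MeasurableSpace X] [OpensMeasurableSpace X] [HasOuterApproxClosed X]
    {μs : ℕ → Measure X} [∀ n, IsProbabilityMeasure (μs n)] {μ : Measure X}
    [IsProbabilityMeasure μ]
    (hweak : ∀ φ : X →ᵇ ℝ, Tendsto (fun n => ∫ x, φ x ∂μs n) atTop (𝓝 (∫ x, φ x ∂μ)))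
    {f : X → ℝ} (hf : Continuous f) (hf₀ : 0 ≤ f) {C : ℝ≥0∞}
    (hC : ∀ n, ∫⁻ x, ENNReal.ofReal (f x) ∂μs n ≤ C) :
    ∫⁻ x, ENNReal.ofReal (f x) ∂μ ≤ C := by
  have hconv : Tendsto (β := ProbabilityMeasure X) (fun n => ⟨μs n, inferInstance⟩) atTop
      (𝓝 ⟨μ, inferInstance⟩) :=
    ProbabilityMeasure.tendsto_iff_forall_integral_tendsto.2 hweak
  calc ∫⁻ x, ENNReal.ofReal (f x) ∂μ
      ≤ atTop.liminf fun n => ∫⁻ x, ENNReal.ofReal (f x) ∂μs n :=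
        lintegral_le_liminf_lintegral_of_forall_isOpen_measure_le_liminf_measure hf hf₀
          fun _ hG => ProbabilityMeasure.le_liminf_measure_open_of_tendsto hconv hG
    _ ≤ C := liminf_le_of_frequently_le' (Frequently.of_forall hC)

lemma isLittleO_rpow_exp_sq_div {c : ℝ} (hc : 0 < c) (p : ℝ) :
    (fun t : ℝ => t ^ p) =o[atTop] fun t => Real.exp (t ^ 2 / c) := by
  refine ((isLittleO_rpow_exp_pos_mul_atTop (p / 2) (inv_pos.2 hc)).comp_tendsto
    (tendsto_pow_atTop two_ne_zero)).congr' ?_ (.of_forall fun t => ?_)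
  · filter_upwards [eventually_ge_atTop 0] with t ht
    rw [Function.comp_apply, ← Real.rpow_natCast, ← Real.rpow_mul ht]
    norm_num [mul_div_cancel₀]
  · simp [div_eq_inv_mul]

namespace EuclideanSpace

variable {d : ℕ}

lemma natCast_mul_exp_norm_sq_div_le (hd : 0 < d) (σ : ℝ) (x : EuclideanSpace ℝ (Fin d)) :
    d * Real.exp (‖x‖ ^ 2 / (d * σ ^ 2)) ≤ ∑ i, Real.exp (x i ^ 2 / σ ^ 2) := by
  have hd' : (0 : ℝ) < d := Nat.cast_pos.2 hd
  have hjensen := convexOn_exp.map_sum_le (t := .univ) (w := fun _ => (d : ℝ)⁻¹)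
    (p := fun i => x i ^ 2 / σ ^ 2) (fun _ _ => by positivity) (by simp [hd'.ne'])
    (fun _ _ => Set.mem_univ _)
  simp only [smul_eq_mul, ← Finset.mul_sum] at hjensen
  have hnorm : ‖x‖ ^ 2 / (d * σ ^ 2) = (d : ℝ)⁻¹ * ∑ i, x i ^ 2 / σ ^ 2 := by
    simp only [EuclideanSpace.norm_sq_eq, Real.norm_eq_abs, sq_abs, ← Finset.sum_div]
    field_simp
  rw [hnorm]
  calc (d : ℝ) * Real.exp _ ≤ d * ((d : ℝ)⁻¹ * ∑ i, Real.exp (x i ^ 2 / σ ^ 2)) := by gcongr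
    _ = _ := by field_simp

lemma exists_norm_rpow_sub_min_le {σ p ε : ℝ} (hσ : 0 < σ) (hp : 0 ≤ p) (hε : 0 < ε) :
    ∃ M, 0 ≤ M ∧ ∀ x : EuclideanSpace ℝ (Fin d),
      ‖x‖ ^ p - min (‖x‖ ^ p) M ≤ ε * Real.exp (‖x‖ ^ 2 / (d * σ ^ 2)) := by
  rcases Nat.eq_zero_or_pos d with rfl | hd
  · refine ⟨1, zero_le_one, fun x => ?_⟩
    rw [Subsingleton.elim x 0, norm_zero, min_eq_left (Real.zero_rpow_le_one p), sub_self]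
    positivity
  obtain ⟨R, hR⟩ := eventually_atTop.1
    ((isLittleO_rpow_exp_sq_div (c := d * σ ^ 2) (by positivity) p).bound hε)
  refine ⟨max R 0 ^ p, by positivity, fun x => ?_⟩
  rcases le_or_gt ‖x‖ (max R 0) with hx | hx
  · rw [min_eq_left (Real.rpow_le_rpow (norm_nonneg x) hx hp), sub_self]
    positivity
  · have hxR := hR ‖x‖ ((le_max_left R 0).trans hx.le)
    rw [Real.norm_of_nonneg (by positivity), Real.norm_of_nonneg (by positivity)] at hxR
    have : 0 ≤ min (‖x‖ ^ p) (max R 0 ^ p) := le_min (by positivity) (by positivity)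
    linarith

end EuclideanSpace

namespace IsSubgaussian

open EuclideanSpace

variable {d : ℕ} {σ : ℝ} {ν : Measure (EuclideanSpace ℝ (Fin d))}

lemma lintegral_exp_norm_sq_le (hν : IsSubgaussian σ ν) :
    ∫⁻ x, ENNReal.ofReal (Real.exp (‖x‖ ^ 2 / (d * σ ^ 2))) ∂ν ≤ 2 := by
  have := hν.1
  rcases Nat.eq_zero_or_pos d with rfl | hd
  · simp
  have hcoord (i : Fin d) : ∫⁻ x, ENNReal.ofReal (Real.exp (x i ^ 2 / σ ^ 2)) ∂ν ≤ 2 := by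
    simpa [EuclideanSpace.inner_single_right] using hν.2 (EuclideanSpace.single i 1) (by simp)
  have hpoint (x : EuclideanSpace ℝ (Fin d)) :
      d * ENNReal.ofReal (Real.exp (‖x‖ ^ 2 / (d * σ ^ 2))) ≤
        ∑ i, ENNReal.ofReal (Real.exp (x i ^ 2 / σ ^ 2)) := by
    rw [← ENNReal.ofReal_natCast, ← ENNReal.ofReal_mul (Nat.cast_nonneg d),
      ← ENNReal.ofReal_sum_of_nonneg fun _ _ => (Real.exp_pos _).le]
    exact ENNReal.ofReal_le_ofReal (natCast_mul_exp_norm_sq_div_le hd σ x)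
  refine (ENNReal.mul_le_mul_iff_right (a := d) (by simp [hd.ne']) (natCast_ne_top d)).1 ?_
  calc (d : ℝ≥0∞) * ∫⁻ x, ENNReal.ofReal (Real.exp (‖x‖ ^ 2 / (d * σ ^ 2))) ∂ν
      = ∫⁻ x, d * ENNReal.ofReal (Real.exp (‖x‖ ^ 2 / (d * σ ^ 2))) ∂ν :=
        (lintegral_const_mul' _ _ (natCast_ne_top d)).symm
    _ ≤ ∫⁻ x, ∑ i, ENNReal.ofReal (Real.exp (x i ^ 2 / σ ^ 2)) ∂ν := lintegral_mono hpoint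
    _ = ∑ i, ∫⁻ x, ENNReal.ofReal (Real.exp (x i ^ 2 / σ ^ 2)) ∂ν :=
        lintegral_finsetSum _ fun _ _ => by fun_prop
    _ ≤ ∑ _i : Fin d, 2 := Finset.sum_le_sum fun i _ => hcoord i
    _ = d * 2 := by simp

lemma integrable_exp_norm_sq (hν : IsSubgaussian σ ν) :
    Integrable (fun x => Real.exp (‖x‖ ^ 2 / (d * σ ^ 2))) ν := by
  refine ⟨by fun_prop, ?_⟩
  rw [hasFiniteIntegral_iff_ofReal (.of_forall fun _ => (Real.exp_pos _).le)]
  exact hν.lintegral_exp_norm_sq_le.trans_lt ofNat_lt_top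

lemma integral_exp_norm_sq_le (hν : IsSubgaussian σ ν) :
    ∫ x, Real.exp (‖x‖ ^ 2 / (d * σ ^ 2)) ∂ν ≤ 2 := by
  rw [integral_eq_lintegral_of_nonneg_ae (.of_forall fun _ => (Real.exp_pos _).le) (by fun_prop)]
  exact toReal_le_of_le_ofReal zero_le_two (by simpa using hν.lintegral_exp_norm_sq_le)

lemma integrable_norm_rpow (hσ : 0 < σ) (hν : IsSubgaussian σ ν) {p : ℝ} (hp : 0 ≤ p) :
    Integrable (fun x => ‖x‖ ^ p) ν := by
  have := hν.1
  obtain ⟨M, -, hM⟩ := exists_norm_rpow_sub_min_le (d := d) hσ hp one_pos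
  refine ((integrable_const M).add hν.integrable_exp_norm_sq).mono'
    (continuous_norm.rpow_const fun _ => Or.inr hp).aestronglyMeasurable (.of_forall fun x => ?_)
  rw [Real.norm_of_nonneg (by positivity), Pi.add_apply]
  linarith [hM x, min_le_right (‖x‖ ^ p) M]

lemma dist_integral_norm_rpow_integral_min_le (hσ : 0 < σ) (hν : IsSubgaussian σ ν) {p M ε : ℝ}
    (hp : 0 ≤ p) (hε : 0 ≤ ε)
    (hM : ∀ x : EuclideanSpace ℝ (Fin d),
      ‖x‖ ^ p - min (‖x‖ ^ p) M ≤ ε * Real.exp (‖x‖ ^ 2 / (d * σ ^ 2))) :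
    dist (∫ x, ‖x‖ ^ p ∂ν) (∫ x, min (‖x‖ ^ p) M ∂ν) ≤ 2 * ε := by
  have := hν.1
  rw [Real.dist_eq]
  calc |∫ x, ‖x‖ ^ p ∂ν - ∫ x, min (‖x‖ ^ p) M ∂ν|
      ≤ ε * ∫ x, Real.exp (‖x‖ ^ 2 / (d * σ ^ 2)) ∂ν :=
        abs_integral_sub_integral_min_le (hν.integrable_norm_rpow hσ hp)
          hν.integrable_exp_norm_sq hM
    _ ≤ ε * 2 := by gcongr; exact hν.integral_exp_norm_sq_le
    _ = 2 * ε := mul_comm _ _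

variable {μs : ℕ → Measure (EuclideanSpace ℝ (Fin d))} {μ : Measure (EuclideanSpace ℝ (Fin d))}

lemma of_forall_tendsto_integral (hsub : ∀ n, IsSubgaussian σ (μs n)) [IsProbabilityMeasure μ]
    (hweak : ∀ φ : EuclideanSpace ℝ (Fin d) →ᵇ ℝ,
      Tendsto (fun n => ∫ x, φ x ∂μs n) atTop (𝓝 (∫ x, φ x ∂μ))) :
    IsSubgaussian σ μ := by
  have := fun n => (hsub n).1
  exact ⟨‹_›, fun v hv => lintegral_le_of_forall_tendsto_integral hweak (by fun_prop)
    (fun _ => (Real.exp_pos _).le) fun n => (hsub n).2 v hv⟩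

lemma tendsto_integral_norm_rpow (hσ : 0 < σ) (hsub : ∀ n, IsSubgaussian σ (μs n))
    (hμ : IsSubgaussian σ μ)
    (hweak : ∀ φ : EuclideanSpace ℝ (Fin d) →ᵇ ℝ,
      Tendsto (fun n => ∫ x, φ x ∂μs n) atTop (𝓝 (∫ x, φ x ∂μ)))
    {p : ℝ} (hp : 0 ≤ p) :
    Tendsto (fun n => ∫ x, ‖x‖ ^ p ∂μs n) atTop (𝓝 (∫ x, ‖x‖ ^ p ∂μ)) := by
  refine tendsto_of_forall_dist_le fun ε hε => ?_
  obtain ⟨M, hM₀, hM⟩ := exists_norm_rpow_sub_min_le (d := d) hσ hp (half_pos hε)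
  let φ : EuclideanSpace ℝ (Fin d) →ᵇ ℝ := .ofNormedAddCommGroup (fun x => min (‖x‖ ^ p) M)
    ((continuous_norm.rpow_const fun _ => Or.inr hp).min continuous_const) M fun x => by
      rw [Real.norm_of_nonneg (le_min (by positivity) hM₀)]
      exact min_le_right _ _
  have hdist {ν} (hν : IsSubgaussian σ ν) : dist (∫ x, ‖x‖ ^ p ∂ν) (∫ x, φ x ∂ν) ≤ ε :=
    (hν.dist_integral_norm_rpow_integral_min_le hσ hp (half_pos hε).le hM).trans_eq
      (mul_div_cancel₀ ε two_ne_zero)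
  exact ⟨_, _, hweak φ, fun n => hdist (hsub n), hdist hμ⟩

end IsSubgaussian

/-- If a sequence of `σ`-subgaussian probability measures converges weakly to a
probability measure `μ`, then `μ` is `σ`-subgaussian and all moments `∫ ‖x‖^p`
(for real `p ≥ 1`) converge. -/
theorem subgaussian_weak_limit
    {d : ℕ} (σ : ℝ) (hσ : 0 < σ)
    (μn : ℕ → Measure (EuclideanSpace ℝ (Fin d))) (hsub : ∀ n, IsSubgaussian σ (μn n))
    (μ : Measure (EuclideanSpace ℝ (Fin d))) (hμ : IsProbabilityMeasure μ)
    (hweak : ∀ φ : EuclideanSpace ℝ (Fin d) → ℝ, Continuous φ → (∃ C : ℝ, ∀ x, |φ x| ≤ C) →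
      Tendsto (fun n => ∫ x, φ x ∂(μn n)) atTop (𝓝 (∫ x, φ x ∂μ))) :
    IsSubgaussian σ μ ∧
    ∀ p : ℝ, 1 ≤ p →
      Tendsto (fun n => ∫ x, ‖x‖ ^ p ∂(μn n)) atTop (𝓝 (∫ x, ‖x‖ ^ p ∂μ)) := by
  have hweak' (φ : EuclideanSpace ℝ (Fin d) →ᵇ ℝ) :
      Tendsto (fun n => ∫ x, φ x ∂μn n) atTop (𝓝 (∫ x, φ x ∂μ)) :=
    hweak φ φ.continuous ⟨‖φ‖, fun x => by simpa using φ.norm_coe_le_norm x⟩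
  have hlim : IsSubgaussian σ μ := .of_forall_tendsto_integral hsub hweak'
  exact ⟨hlim, fun p hp => hlim.tendsto_integral_norm_rpow hσ hsub hweak' (by linarith)⟩
end

section
/- Let F : P₂(ℝ^d) → ℝ be convex (F((1−t)μ + tρ) ≤ (1−t)F(μ) + tF(ρ) for all μ, ρ ∈ P₂(ℝ^d), t ∈ [0,1]) and suppose F admits a minimizer μ* ∈ P₂(ℝ^d) and admits a derivative δ at μ*. If δ : ℝ^d → ℝ is differentiable, then ∇δ(x) = 0 for every x in the support of μ*; in particular ∇δ(x) = 0 for μ*-almost every x, i.e. μ* is a critical point of F. -/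
open MeasureTheory ENNReal Filter
open scoped Topology

/-- The (topological) support of a measure: points all of whose open neighbourhoods have
nonzero measure. -/
def msupport {d : ℕ} (μ : Measure (EuclideanSpace ℝ (Fin d))) :
    Set (EuclideanSpace ℝ (Fin d)) :=
  {x | ∀ U : Set (EuclideanSpace ℝ (Fin d)), IsOpen U → x ∈ U → μ U ≠ 0}

/-!
Along the segment from the minimizer `μ*` towards any `ρ ∈ P₂`, the difference quotients of `F`
are nonnegative, so their limit `∫ δ dρ - ∫ δ dμ*` is nonnegative. Taking `ρ` a Dirac mass shows
that `δ ≥ c := ∫ δ dμ*` everywhere; since `δ` integrates to `c` against `μ*`, it equals `c`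
`μ*`-a.e., and by continuity on the support of `μ*`. Such points are global minima of `δ`, where
its gradient vanishes.
-/

lemma nonneg_of_tendsto_slope_of_eventually_le {g : ℝ → ℝ} {a L : ℝ}
    (hg : ∀ᶠ t in 𝓝[>] 0, a ≤ g t) (hL : Tendsto (fun t => (g t - a) / t) (𝓝[>] 0) (𝓝 L)) :
    0 ≤ L := by
  refine ge_of_tendsto hL ?_
  filter_upwards [hg, self_mem_nhdsWithin] with t hgt (ht : 0 < t)
  exact div_nonneg (sub_nonneg.2 hgt) ht.le

lemma ae_eq_const_of_forall_le_of_integral_eq {α : Type*} [MeasurableSpace α] {μ : Measure α}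
    [IsProbabilityMeasure μ] {f : α → ℝ} {c : ℝ} (hf : Integrable f μ) (hle : ∀ x, c ≤ f x)
    (hint : ∫ x, f x ∂μ = c) : f =ᵐ[μ] fun _ => c := by
  refine ((integral_eq_iff_of_ae_le (integrable_const c) hf (.of_forall hle)).1 ?_).symm
  simp [hint]

lemma gradient_eq_zero_of_forall_le {E : Type*} [NormedAddCommGroup E] [InnerProductSpace ℝ E]
    [CompleteSpace E] {f : E → ℝ} {x : E} (hmin : ∀ y, f x ≤ f y) : gradient f x = 0 := by
  have hloc : IsLocalMin f x := (isMinOn_univ_iff.2 hmin).isLocalMin univ_mem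
  simp [gradient, hloc.fderiv_eq_zero]

section P2

variable {d : ℕ}

lemma memP2_dirac (a : EuclideanSpace ℝ (Fin d)) : MemP2 (Measure.dirac a) :=
  ⟨inferInstance, integrable_dirac enorm_lt_top⟩

lemma MemP2.segment {μ ρ : Measure (EuclideanSpace ℝ (Fin d))} (hμ : MemP2 μ) (hρ : MemP2 ρ)
    {t : ℝ} (ht₀ : 0 ≤ t) (ht₁ : t ≤ 1) :
    MemP2 (ENNReal.ofReal (1 - t) • μ + ENNReal.ofReal t • ρ) := by
  obtain ⟨hμp, hμi⟩ := hμ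
  obtain ⟨hρp, hρi⟩ := hρ
  refine ⟨⟨?_⟩, (hμi.smul_measure ofReal_ne_top).add_measure (hρi.smul_measure ofReal_ne_top)⟩
  rw [Measure.add_apply, Measure.smul_apply, Measure.smul_apply, measure_univ, measure_univ,
    smul_eq_mul, smul_eq_mul, mul_one, mul_one, ← ofReal_add (by linarith) ht₀]
  norm_num

lemma eqOn_msupport_of_ae_eq {β : Type*} [TopologicalSpace β] [T2Space β]
    {μ : Measure (EuclideanSpace ℝ (Fin d))} {f g : EuclideanSpace ℝ (Fin d) → β}
    (hf : Continuous f) (hg : Continuous g) (hfg : f =ᵐ[μ] g) :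
    ∀ x ∈ msupport μ, f x = g x := by
  intro x hx
  by_contra hne
  exact hx {y | f y ≠ g y} (isClosed_eq hf hg).isOpen_compl hne (ae_iff.1 hfg)

lemma integral_le_integral_of_isMinOn_of_tendsto_slope
    (F : Measure (EuclideanSpace ℝ (Fin d)) → ℝ) {μ ρ : Measure (EuclideanSpace ℝ (Fin d))}
    (hμ : MemP2 μ) (hρ : MemP2 ρ) (hmin : ∀ ν, MemP2 ν → F μ ≤ F ν)
    (δ : EuclideanSpace ℝ (Fin d) → ℝ)
    (hderiv : Tendsto
      (fun t : ℝ => (F (ENNReal.ofReal (1 - t) • μ + ENNReal.ofReal t • ρ) - F μ) / t)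
      (𝓝[>] 0) (𝓝 ((∫ x, δ x ∂ρ) - ∫ x, δ x ∂μ))) :
    ∫ x, δ x ∂μ ≤ ∫ x, δ x ∂ρ := by
  refine sub_nonneg.1 (nonneg_of_tendsto_slope_of_eventually_le ?_ hderiv)
  filter_upwards [Ioc_mem_nhdsGT_of_mem (Set.left_mem_Ico.2 one_pos)] with t ht
  exact hmin _ (hμ.segment hρ ht.1.le ht.2)

end P2

theorem minimizer_is_critical_point_general
    {d : ℕ} (F : Measure (EuclideanSpace ℝ (Fin d)) → ℝ)
    (μstar : Measure (EuclideanSpace ℝ (Fin d))) (hμstar : MemP2 μstar)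
    (hmin : ∀ μ, MemP2 μ → F μstar ≤ F μ)
    (δ : EuclideanSpace ℝ (Fin d) → ℝ) (hδcont : Continuous δ)
    (hδint : Integrable δ μstar)
    (hderiv : ∀ ρ : Measure (EuclideanSpace ℝ (Fin d)), MemP2 ρ →
      Tendsto
        (fun t : ℝ =>
          (F (ENNReal.ofReal (1 - t) • μstar + ENNReal.ofReal t • ρ) - F μstar) / t)
        (𝓝[>] (0 : ℝ)) (𝓝 ((∫ x, δ x ∂ρ) - ∫ x, δ x ∂μstar))) :
    (∀ x ∈ msupport μstar, gradient δ x = 0) ∧ ∀ᵐ x ∂μstar, gradient δ x = 0 := by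
  have := hμstar.1
  set c := ∫ x, δ x ∂μstar
  have hle : ∀ y, c ≤ δ y := fun y => by
    simpa using integral_le_integral_of_isMinOn_of_tendsto_slope F hμstar (memP2_dirac y) hmin δ
      (hderiv _ (memP2_dirac y))
  have hae : δ =ᵐ[μstar] fun _ => c := ae_eq_const_of_forall_le_of_integral_eq hδint hle rfl
  have hgrad : ∀ x, δ x = c → gradient δ x = 0 := fun x hx =>
    gradient_eq_zero_of_forall_le (hx ▸ hle)
  exact ⟨fun x hx => hgrad x (eqOn_msupport_of_ae_eq hδcont continuous_const hae x hx),
    hae.mono hgrad⟩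

/-- If a convex functional `F` on `P₂(ℝ^d)` has a minimizer `μ*` admitting a
differentiable derivative `δ`, then `∇δ` vanishes on the support of `μ*`; in
particular `μ*` is a critical point of `F`. -/
theorem minimizer_is_critical_point
    {d : ℕ} (F : Measure (EuclideanSpace ℝ (Fin d)) → ℝ)
    (hconv : ∀ μ ρ : Measure (EuclideanSpace ℝ (Fin d)), MemP2 μ → MemP2 ρ →
      ∀ t : ℝ, 0 ≤ t → t ≤ 1 →
        F (ENNReal.ofReal (1 - t) • μ + ENNReal.ofReal t • ρ)
          ≤ (1 - t) * F μ + t * F ρ)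
    (μstar : Measure (EuclideanSpace ℝ (Fin d))) (hμstar : MemP2 μstar)
    (hmin : ∀ μ, MemP2 μ → F μstar ≤ F μ)
    (δ : EuclideanSpace ℝ (Fin d) → ℝ) (hδcont : Continuous δ)
    (hδint : Integrable δ μstar) (hδint' : ∀ ρ, MemP2 ρ → Integrable δ ρ)
    (hderiv : ∀ ρ : Measure (EuclideanSpace ℝ (Fin d)), MemP2 ρ →
      Tendsto
        (fun t : ℝ =>
          (F (ENNReal.ofReal (1 - t) • μstar + ENNReal.ofReal t • ρ) - F μstar) / t)
        (𝓝[>] (0 : ℝ)) (𝓝 ((∫ x, δ x ∂ρ) - ∫ x, δ x ∂μstar)))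
    (hδdiff : ∀ x, DifferentiableAt ℝ δ x) :
    (∀ x ∈ msupport μstar, gradient δ x = 0) ∧ ∀ᵐ x ∂μstar, gradient δ x = 0 :=
  minimizer_is_critical_point_general F μstar hμstar hmin δ hδcont hδint hderiv
end

section
/- There exists an absolute constant A > 0 with the following property. Let ε > 0, let μ ∈ P₂(ℝ^d), let ν be a σ-subgaussian probability measure on ℝ^d (σ > 0), and let g : ℝ^d → ℝ be measurable with g(y) ≤ ½∫‖z−y‖² dμ(z) for all y ∈ ℝ^d. Then for every x ∈ ℝ^d, the integral I(x) := ∫ exp((g(y) − ½‖x−y‖²)/ε) dν(y) is finite and ε·log I(x) ≤ ½·M₂(μ) − ½‖x‖² + (A·σ²/ε)·‖x − E(μ)‖² + ‖E(ν)‖·‖x − E(μ)‖. In particular, the function f(x) := −ε·log I(x) satisfies a lower bound of the form f(x) ≥ −C·(‖x‖² + 1) for a constant C depending only on ε, σ, ‖E(μ)‖, M₂(μ) and ‖E(ν)‖. -/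
open MeasureTheory ENNReal
open scoped RealInnerProductSpace

open Real

/-!
Expanding the squares, the hypothesis on `g` gives
`g y - ½‖x - y‖² ≤ ½ M₂(μ) - ½‖x‖² + ⟪x - E(μ), y⟫`, so `I(x)` is at most
`exp ((½ M₂(μ) - ½‖x‖²) / ε)` times the moment generating function of `ν` at
`w = (x - E(μ)) / ε`. For a real variable `X` with `∫ exp (X² / τ²) ≤ 2` one has
`log ∫ exp X ≤ |∫ X| + τ²`: for `τ ≤ 1` from `exp x ≤ x + exp (x²)` and convexity of `exp`
between `0` and `x² / τ²`, for `τ ≥ 1` from `x ≤ τ² / 4 + x² / τ²` and `log 2 ≤ 3 τ² / 4`.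
Applied to `X = ⟪w, ·⟫`, which satisfies this with `τ = σ ‖w‖`, this yields the bound with `A = 1`.
-/

namespace Real

lemma exp_le_add_exp_sq (z : ℝ) : exp z ≤ z + exp (z ^ 2) := by
  have hsq := add_one_le_exp (z ^ 2)
  rcases le_or_gt |z| 1 with hz | hz
  · linarith [(abs_le.mp (abs_exp_sub_one_sub_id_le hz)).2]
  rcases lt_abs.mp hz with hz | hz
  · linarith [exp_le_exp.mpr (show z ≤ z ^ 2 by nlinarith)]
  · nlinarith [exp_le_one_iff.mpr (show z ≤ 0 by linarith)]

lemma exp_le_exp_div_four_mul_exp_sq_div {τ : ℝ} (hτ : τ ≠ 0) (x : ℝ) :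
    exp x ≤ exp (τ ^ 2 / 4) * exp (x ^ 2 / τ ^ 2) := by
  rw [← exp_add, exp_le_exp]
  have hsq : τ ^ 2 / 4 + x ^ 2 / τ ^ 2 - x = (x / τ - τ / 2) ^ 2 := by
    field_simp; ring
  linarith [sq_nonneg (x / τ - τ / 2)]

lemma exp_le_one_sub_sq_add_add_sq_mul_exp_sq_div {τ : ℝ} (hτ : 0 < τ) (hτ₁ : τ ≤ 1) (x : ℝ) :
    exp x ≤ 1 - τ ^ 2 + x + τ ^ 2 * exp (x ^ 2 / τ ^ 2) := by
  have hconv := convexOn_exp.2 (Set.mem_univ 0) (Set.mem_univ (x ^ 2 / τ ^ 2))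
    (show 0 ≤ 1 - τ ^ 2 by nlinarith) (sq_nonneg τ) (by ring)
  have harg : τ ^ 2 * (x ^ 2 / τ ^ 2) = x ^ 2 := by field_simp
  simp only [smul_eq_mul, mul_zero, zero_add, exp_zero, mul_one, harg] at hconv
  linarith [exp_le_add_exp_sq x]

end Real

section ExpSquareMoment

variable {Ω : Type*} [MeasurableSpace Ω] {μ : Measure Ω} {X : Ω → ℝ} {τ : ℝ}

lemma integrable_exp_sq_div_of_lintegral_le_two (hX : AEStronglyMeasurable X μ)
    (h : ∫⁻ ω, ENNReal.ofReal (exp (X ω ^ 2 / τ ^ 2)) ∂μ ≤ 2) :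
    Integrable (fun ω => exp (X ω ^ 2 / τ ^ 2)) μ :=
  (lintegral_ofReal_ne_top_iff_integrable (by fun_prop)
    (.of_forall fun _ => (exp_pos _).le)).1 (ne_top_of_le_ne_top ofNat_ne_top h)

lemma integral_exp_sq_div_le_two (hX : AEStronglyMeasurable X μ)
    (h : ∫⁻ ω, ENNReal.ofReal (exp (X ω ^ 2 / τ ^ 2)) ∂μ ≤ 2) :
    ∫ ω, exp (X ω ^ 2 / τ ^ 2) ∂μ ≤ 2 := by
  rw [integral_eq_lintegral_of_nonneg_ae (.of_forall fun _ => (exp_pos _).le) (by fun_prop)]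
  exact toReal_le_of_le_ofReal zero_le_two (by simpa using h)

lemma integrable_of_lintegral_exp_sq_div_le_two (hτ : τ ≠ 0) (hX : AEStronglyMeasurable X μ)
    (h : ∫⁻ ω, ENNReal.ofReal (exp (X ω ^ 2 / τ ^ 2)) ∂μ ≤ 2) : Integrable X μ := by
  refine ((integrable_exp_sq_div_of_lintegral_le_two hX h).const_mul (exp (τ ^ 2 / 4))).mono' hX
    (.of_forall fun ω => ?_)
  calc ‖X ω‖ = |X ω| := norm_eq_abs _
    _ ≤ exp |X ω| := by linarith [add_one_le_exp |X ω|]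
    _ ≤ exp (τ ^ 2 / 4) * exp (X ω ^ 2 / τ ^ 2) := by
      simpa using exp_le_exp_div_four_mul_exp_sq_div hτ |X ω|

lemma integrable_exp_of_lintegral_exp_sq_div_le_two (hτ : τ ≠ 0) (hX : AEStronglyMeasurable X μ)
    (h : ∫⁻ ω, ENNReal.ofReal (exp (X ω ^ 2 / τ ^ 2)) ∂μ ≤ 2) :
    Integrable (fun ω => exp (X ω)) μ :=
  ((integrable_exp_sq_div_of_lintegral_le_two hX h).const_mul (exp (τ ^ 2 / 4))).mono'
    (by fun_prop) (.of_forall fun ω => by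
      simpa [abs_of_pos (exp_pos _)] using exp_le_exp_div_four_mul_exp_sq_div hτ (X ω))

lemma log_integral_exp_le_of_lintegral_exp_sq_div_le_two [IsProbabilityMeasure μ] (hτ : 0 < τ)
    (hX : AEStronglyMeasurable X μ) (h : ∫⁻ ω, ENNReal.ofReal (exp (X ω ^ 2 / τ ^ 2)) ∂μ ≤ 2) :
    Real.log (∫ ω, exp (X ω) ∂μ) ≤ |∫ ω, X ω ∂μ| + τ ^ 2 := by
  have hexp := integrable_exp_of_lintegral_exp_sq_div_le_two hτ.ne' hX h
  have hsq := integrable_exp_sq_div_of_lintegral_le_two hX h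
  have hsq_le := integral_exp_sq_div_le_two hX h
  have hpos := integral_exp_pos hexp
  rcases le_total τ 1 with hτ₁ | hτ₁
  · have hX₁ := integrable_of_lintegral_exp_sq_div_le_two hτ.ne' hX h
    have hlin : Integrable (fun ω => 1 - τ ^ 2 + X ω) μ := (integrable_const _).add hX₁
    have hle : ∫ ω, exp (X ω) ∂μ ≤ 1 + ∫ ω, X ω ∂μ + τ ^ 2 :=
      calc ∫ ω, exp (X ω) ∂μ ≤ ∫ ω, (1 - τ ^ 2 + X ω + τ ^ 2 * exp (X ω ^ 2 / τ ^ 2)) ∂μ :=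
            integral_mono hexp (hlin.add (hsq.const_mul _))
              fun ω => exp_le_one_sub_sq_add_add_sq_mul_exp_sq_div hτ hτ₁ (X ω)
        _ = 1 - τ ^ 2 + ∫ ω, X ω ∂μ + τ ^ 2 * ∫ ω, exp (X ω ^ 2 / τ ^ 2) ∂μ := by
            rw [integral_add hlin (hsq.const_mul _),
              integral_add (integrable_const _) hX₁, integral_const, integral_const_mul]
            simp
        _ ≤ 1 + ∫ ω, X ω ∂μ + τ ^ 2 := by nlinarith
    linarith [log_le_sub_one_of_pos hpos, le_abs_self (∫ ω, X ω ∂μ)]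
  · have hle : ∫ ω, exp (X ω) ∂μ ≤ exp (τ ^ 2 / 4) * 2 :=
      calc ∫ ω, exp (X ω) ∂μ ≤ ∫ ω, exp (τ ^ 2 / 4) * exp (X ω ^ 2 / τ ^ 2) ∂μ :=
            integral_mono hexp (hsq.const_mul _)
              fun ω => exp_le_exp_div_four_mul_exp_sq_div hτ.ne' (X ω)
        _ ≤ exp (τ ^ 2 / 4) * 2 := by
            rw [integral_const_mul]; exact mul_le_mul_of_nonneg_left hsq_le (exp_pos _).le
    calc Real.log (∫ ω, exp (X ω) ∂μ) ≤ Real.log (exp (τ ^ 2 / 4) * 2) := log_le_log hpos hle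
      _ = τ ^ 2 / 4 + Real.log 2 := by rw [Real.log_mul (exp_ne_zero _) two_ne_zero, log_exp]
      _ ≤ |∫ ω, X ω ∂μ| + τ ^ 2 := by
          nlinarith [log_two_lt_d9, abs_nonneg (∫ ω, X ω ∂μ)]

end ExpSquareMoment

namespace IsSubgaussian

variable {d : ℕ} {σ : ℝ} {ν : Measure (EuclideanSpace ℝ (Fin d))}

lemma lintegral_exp_inner_sq_le_two (hν : IsSubgaussian σ ν) {w : EuclideanSpace ℝ (Fin d)}
    (hw : w ≠ 0) : ∫⁻ y, ENNReal.ofReal (exp (⟪w, y⟫ ^ 2 / (σ * ‖w‖) ^ 2)) ∂ν ≤ 2 := by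
  convert hν.2 (‖w‖⁻¹ • w) (norm_smul_inv_norm hw) using 5 with y
  rw [real_inner_smul_right, real_inner_comm]
  field_simp

lemma integrable_inner (hσ : 0 < σ) (hν : IsSubgaussian σ ν) (w : EuclideanSpace ℝ (Fin d)) :
    Integrable (fun y => ⟪w, y⟫) ν := by
  rcases eq_or_ne w 0 with rfl | hw
  · simp
  · exact integrable_of_lintegral_exp_sq_div_le_two (by positivity) (by fun_prop)
      (hν.lintegral_exp_inner_sq_le_two hw)

lemma integrable_id (hσ : 0 < σ) (hν : IsSubgaussian σ ν) :
    Integrable (fun y : EuclideanSpace ℝ (Fin d) => y) ν :=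
  integrable_piLp_iff.2 fun i => by
    simpa [EuclideanSpace.inner_single_left] using hν.integrable_inner hσ (EuclideanSpace.single i 1)

lemma integrable_exp_inner (hσ : 0 < σ) (hν : IsSubgaussian σ ν) (w : EuclideanSpace ℝ (Fin d)) :
    Integrable (fun y => exp ⟪w, y⟫) ν := by
  have := hν.1
  rcases eq_or_ne w 0 with rfl | hw
  · simp
  · exact integrable_exp_of_lintegral_exp_sq_div_le_two (by positivity) (by fun_prop)
      (hν.lintegral_exp_inner_sq_le_two hw)

lemma log_integral_exp_inner_le (hσ : 0 < σ) (hν : IsSubgaussian σ ν)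
    (w : EuclideanSpace ℝ (Fin d)) :
    Real.log (∫ y, exp ⟪w, y⟫ ∂ν) ≤ σ ^ 2 * ‖w‖ ^ 2 + ‖∫ y, y ∂ν‖ * ‖w‖ := by
  have := hν.1
  rcases eq_or_ne w 0 with rfl | hw
  · simp
  calc Real.log (∫ y, exp ⟪w, y⟫ ∂ν) ≤ |∫ y, ⟪w, y⟫ ∂ν| + (σ * ‖w‖) ^ 2 :=
        log_integral_exp_le_of_lintegral_exp_sq_div_le_two (by positivity) (by fun_prop)
          (hν.lintegral_exp_inner_sq_le_two hw)
    _ = |⟪w, ∫ y, y ∂ν⟫| + σ ^ 2 * ‖w‖ ^ 2 := by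
        rw [integral_inner (hν.integrable_id hσ), mul_pow]
    _ ≤ σ ^ 2 * ‖w‖ ^ 2 + ‖∫ y, y ∂ν‖ * ‖w‖ := by
        linarith [abs_real_inner_le_norm w (∫ y, y ∂ν), mul_comm ‖w‖ ‖∫ y, y ∂ν‖]

end IsSubgaussian

section SecondMoment

variable {E : Type*} [NormedAddCommGroup E] [InnerProductSpace ℝ E] [CompleteSpace E]
  [MeasurableSpace E] [OpensMeasurableSpace E] [SecondCountableTopology E]
  {μ : Measure E} [IsProbabilityMeasure μ]

lemma integral_norm_sub_sq_sub_norm_sub_sq (hμ : Integrable (fun z => ‖z‖ ^ 2) μ) (x y : E) :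
    ∫ z, ‖z - y‖ ^ 2 ∂μ - ‖x - y‖ ^ 2
      = ∫ z, ‖z‖ ^ 2 ∂μ - ‖x‖ ^ 2 + 2 * ⟪x - ∫ z, z ∂μ, y⟫ := by
  have hid : Integrable (fun z : E => z) μ :=
    ((memLp_two_iff_integrable_sq_norm aestronglyMeasurable_id).2 hμ).integrable one_le_two
  have hinner : Integrable (fun z => 2 * ⟪z, y⟫) μ := (hid.inner_const (𝕜 := ℝ) y).const_mul 2
  have hmean : ∫ z, ⟪z, y⟫ ∂μ = ⟪∫ z, z ∂μ, y⟫ := by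
    simpa only [real_inner_comm y] using integral_inner hid y
  have hdiff : Integrable (fun z => ‖z‖ ^ 2 - 2 * ⟪z, y⟫) μ := hμ.sub hinner
  simp_rw [norm_sub_sq_real]
  rw [integral_add hdiff (integrable_const _), integral_sub hμ hinner,
    integral_const_mul, hmean, inner_sub_left]
  simp
  ring

end SecondMoment

section ExpComparison

variable {α : Type*} [MeasurableSpace α] {ν : Measure α} {f h : α → ℝ} {K : ℝ}

lemma integrable_exp_of_le_add (hf : AEStronglyMeasurable f ν)
    (hh : Integrable (fun a => exp (h a)) ν) (hle : ∀ a, f a ≤ K + h a) :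
    Integrable (fun a => exp (f a)) ν :=
  (hh.const_mul (exp K)).mono' (by fun_prop) (.of_forall fun a => by
    rw [norm_of_nonneg (exp_pos _).le, ← exp_add]
    exact exp_le_exp.2 (hle a))

lemma log_integral_exp_le_of_le_add [NeZero ν] (hf : AEStronglyMeasurable f ν)
    (hh : Integrable (fun a => exp (h a)) ν) (hle : ∀ a, f a ≤ K + h a) :
    Real.log (∫ a, exp (f a) ∂ν) ≤ K + Real.log (∫ a, exp (h a) ∂ν) := by
  have hint := integrable_exp_of_le_add hf hh hle
  calc Real.log (∫ a, exp (f a) ∂ν) ≤ Real.log (exp K * ∫ a, exp (h a) ∂ν) := by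
        refine log_le_log (integral_exp_pos hint) ?_
        rw [← integral_const_mul]
        exact integral_mono hint (hh.const_mul _) fun a => by
          rw [← exp_add]; exact exp_le_exp.2 (hle a)
    _ = K + Real.log (∫ a, exp (h a) ∂ν) := by
        rw [Real.log_mul (exp_ne_zero _) (integral_exp_pos hh).ne', log_exp]

end ExpComparison

lemma quadratic_le_mul_sq_add_one {M q c a r s : ℝ} (hM : 0 ≤ M) (hq : 0 ≤ q) (hc : 0 ≤ c)
    (ha : 0 ≤ a) (hs : 0 ≤ s) (hsr : s ≤ r + a) :
    M / 2 - r ^ 2 / 2 + q * s ^ 2 + c * s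
      ≤ (M / 2 + 2 * q * (a ^ 2 + 1) + c * (a + 1)) * (r ^ 2 + 1) := by
  have h₁ : s ^ 2 ≤ 2 * (a ^ 2 + 1) * (r ^ 2 + 1) := by
    nlinarith [mul_le_mul hsr hsr hs (hs.trans hsr), sq_nonneg (r - a), sq_nonneg (a * r)]
  have h₂ : s ≤ (a + 1) * (r ^ 2 + 1) := by
    nlinarith [sq_nonneg (r - 1), mul_nonneg ha (sq_nonneg r)]
  nlinarith [mul_le_mul_of_nonneg_left h₁ hq, mul_le_mul_of_nonneg_left h₂ hc,
    mul_nonneg hM (sq_nonneg r)]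

/-- Lower bound on the entropic potential `f(x) = −ε log ∫ exp((g(y) − ½‖x−y‖²)/ε) dν(y)`:
the normalizing integral is finite, `ε log I(x)` satisfies the quadratic upper bound with
an absolute constant `A`, and in particular `f(x) ≥ −C·(‖x‖² + 1)` for a constant `C`
depending only on `ε, σ, ‖E(μ)‖, M₂(μ), ‖E(ν)‖`. -/
theorem entropic_potential_lower_bound :
    ∃ A : ℝ, 0 < A ∧ ∃ C : ℝ → ℝ → ℝ → ℝ → ℝ → ℝ,
      ∀ (d : ℕ) (ε σ : ℝ), 0 < ε → 0 < σ →
      ∀ (μ ν : Measure (EuclideanSpace ℝ (Fin d))), MemP2 μ → IsSubgaussian σ ν →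
      ∀ g : EuclideanSpace ℝ (Fin d) → ℝ, Measurable g →
      (∀ y, g y ≤ (1 / 2) * ∫ z, ‖z - y‖ ^ 2 ∂μ) →
      ∀ x : EuclideanSpace ℝ (Fin d),
        Integrable (fun y => Real.exp ((g y - (1 / 2) * ‖x - y‖ ^ 2) / ε)) ν ∧
        ε * Real.log (∫ y, Real.exp ((g y - (1 / 2) * ‖x - y‖ ^ 2) / ε) ∂ν)
          ≤ (1 / 2) * (∫ z, ‖z‖ ^ 2 ∂μ) - (1 / 2) * ‖x‖ ^ 2
            + (A * σ ^ 2 / ε) * ‖x - ∫ z, z ∂μ‖ ^ 2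
            + ‖∫ z, z ∂ν‖ * ‖x - ∫ z, z ∂μ‖ ∧
        -(C ε σ ‖∫ z, z ∂μ‖ (∫ z, ‖z‖ ^ 2 ∂μ) ‖∫ z, z ∂ν‖) * (‖x‖ ^ 2 + 1)
          ≤ -(ε * Real.log (∫ y, Real.exp ((g y - (1 / 2) * ‖x - y‖ ^ 2) / ε) ∂ν)) := by
  refine ⟨1, one_pos, fun ε σ a M c => M / 2 + 2 * (σ ^ 2 / ε) * (a ^ 2 + 1) + c * (a + 1),
    fun d ε σ hε hσ μ ν ⟨hμ, hμ₂⟩ hν g hg hgle x => ?_⟩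
  have := hν.1
  set Eμ := ∫ z, z ∂μ
  set M₂ := ∫ z, ‖z‖ ^ 2 ∂μ
  set w := ε⁻¹ • (x - Eμ)
  have hexponent : ∀ y, (g y - 1 / 2 * ‖x - y‖ ^ 2) / ε
      ≤ (1 / 2 * M₂ - 1 / 2 * ‖x‖ ^ 2) / ε + ⟪w, y⟫ := fun y => by
    have := integral_norm_sub_sq_sub_norm_sub_sq hμ₂ x y
    rw [real_inner_smul_left, ← div_eq_inv_mul, ← add_div, div_le_div_iff_of_pos_right hε]
    linarith [hgle y]
  have hmeas : AEStronglyMeasurable (fun y => (g y - 1 / 2 * ‖x - y‖ ^ 2) / ε) ν := by fun_prop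
  have hlog := log_integral_exp_le_of_le_add hmeas (hν.integrable_exp_inner hσ w) hexponent
  have hw : ‖w‖ = ‖x - Eμ‖ / ε := by
    rw [norm_smul, norm_inv, Real.norm_of_nonneg hε.le, inv_mul_eq_div]
  have hmain : ε * Real.log (∫ y, Real.exp ((g y - 1 / 2 * ‖x - y‖ ^ 2) / ε) ∂ν)
      ≤ 1 / 2 * M₂ - 1 / 2 * ‖x‖ ^ 2 + (1 * σ ^ 2 / ε) * ‖x - Eμ‖ ^ 2
        + ‖∫ z, z ∂ν‖ * ‖x - Eμ‖ :=
    calc _ ≤ ε * ((1 / 2 * M₂ - 1 / 2 * ‖x‖ ^ 2) / ε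
            + (σ ^ 2 * ‖w‖ ^ 2 + ‖∫ y, y ∂ν‖ * ‖w‖)) := by
          gcongr
          exact hlog.trans (by linarith [hν.log_integral_exp_inner_le hσ w])
      _ = _ := by rw [hw]; field_simp; ring
  refine ⟨integrable_exp_of_le_add hmeas (hν.integrable_exp_inner hσ w) hexponent, hmain, ?_⟩
  have hM₂ : 0 ≤ M₂ := integral_nonneg fun z => sq_nonneg _
  rw [neg_mul, neg_le_neg_iff]
  exact hmain.trans (le_of_eq_of_le (by ring) (quadratic_le_mul_sq_add_one hM₂
    (div_nonneg (sq_nonneg σ) hε.le) (norm_nonneg (∫ z, z ∂ν)) (norm_nonneg Eμ)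
    (norm_nonneg (x - Eμ)) (norm_sub_le x Eμ)))
end

section
/- Let M ∈ ℝ^{m×m} be a symmetric positive semidefinite matrix with Mλ* = 0 for some λ* ∈ Δ^m, and suppose α₂ > 0 satisfies vᵀMv ≥ α₂‖v‖² for every v ∈ ℝ^m orthogonal to λ*. Let (Ω, 𝔽, P) be a probability space, let M̂ : Ω → ℝ^{m×m} be a measurable map taking values in symmetric positive semidefinite matrices with E(|M_{ij} − M̂_{ij}|) ≤ Q for all 1 ≤ i,j ≤ m, and let λ̂ : Ω → Δ^m be measurable with λ̂(ω)ᵀ M̂(ω) λ̂(ω) ≤ λᵀ M̂(ω) λ for every λ ∈ Δ^m and every ω ∈ Ω. Then E(‖λ̂ − λ*‖²₂) ≤ 8·m³·Q/α₂. -/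
open MeasureTheory Matrix

/-!
Quadratic forms over the simplex move by at most `S = ∑ᵢⱼ |Mᵢⱼ - M̂ᵢⱼ|` when `M̂` is replaced
by `M`, so at the empirical minimizer `λ̂ᵀ M λ̂ ≤ λ*ᵀ M λ* + 2S = 2S`. As `M` is symmetric and kills
`λ*`, this is the form of `v = λ̂ - λ*`. The vector `v` sums to zero, so its component along `λ*`
is controlled by its component orthogonal to `λ*`, where the spectral gap applies; this gives
`α₂ ‖v‖² ≤ 2 (m + 1) S` pointwise, and integrating with `E S ≤ m² Q` finishes.
-/

section QuadraticForm

variable {n : Type*} [Fintype n]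

theorem dotProduct_mulVec_add_smul_of_mulVec_eq_zero {R : Type*} [CommRing R]
    {A : Matrix n n R} (hA : A.IsSymm) {k : n → R} (hAk : A *ᵥ k = 0) (x : n → R) (c : R) :
    (x + c • k) ⬝ᵥ A *ᵥ (x + c • k) = x ⬝ᵥ A *ᵥ x := by
  have hkA : ∀ y, k ⬝ᵥ A *ᵥ y = 0 := fun y => by
    rw [dotProduct_mulVec, ← mulVec_transpose, hA.eq, hAk, zero_dotProduct]
  simp [mulVec_add, mulVec_smul, hAk, add_dotProduct, smul_dotProduct, hkA]

theorem abs_dotProduct_mulVec_le_sum_abs {x : n → ℝ} (hx : x ∈ stdSimplex ℝ n)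
    (A : Matrix n n ℝ) : |x ⬝ᵥ A *ᵥ x| ≤ ∑ i, ∑ j, |A i j| := by
  calc |x ⬝ᵥ A *ᵥ x| = |∑ i, ∑ j, x i * A i j * x j| := by
        simp only [dotProduct, mulVec, Finset.mul_sum, mul_assoc]
    _ ≤ ∑ i, ∑ j, |x i * A i j * x j| :=
        (Finset.abs_sum_le_sum_abs _ _).trans
          (Finset.sum_le_sum fun i _ => Finset.abs_sum_le_sum_abs _ _)
    _ ≤ ∑ i, ∑ j, 1 * |A i j| * 1 := by
        gcongr with i _ j _
        rw [abs_mul, abs_mul, abs_of_nonneg (hx.1 i), abs_of_nonneg (hx.1 j)]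
        gcongr <;> first | exact hx.1 _ | exact (mem_Icc_of_mem_stdSimplex hx _).2
    _ = ∑ i, ∑ j, |A i j| := by simp

theorem dotProduct_mulVec_le_add_of_le_of_mem_stdSimplex {A B : Matrix n n ℝ} {x y : n → ℝ}
    (hx : x ∈ stdSimplex ℝ n) (hy : y ∈ stdSimplex ℝ n)
    (hxy : x ⬝ᵥ B *ᵥ x ≤ y ⬝ᵥ B *ᵥ y) :
    x ⬝ᵥ A *ᵥ x ≤ y ⬝ᵥ A *ᵥ y + 2 * ∑ i, ∑ j, |A i j - B i j| := by
  have hsplit : ∀ z : n → ℝ, z ⬝ᵥ A *ᵥ z = z ⬝ᵥ B *ᵥ z + z ⬝ᵥ (A - B) *ᵥ z := fun z => by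
    rw [sub_mulVec, dotProduct_sub]; ring
  have hx' := (abs_le.mp (abs_dotProduct_mulVec_le_sum_abs hx (A - B))).2
  have hy' := (abs_le.mp (abs_dotProduct_mulVec_le_sum_abs hy (A - B))).1
  simp only [Matrix.sub_apply] at hx' hy'
  linarith [hsplit x, hsplit y]

theorem sum_sq_le_card_add_one_mul_of_sum_eq_zero {k v : n → ℝ} (hk : k ∈ stdSimplex ℝ n)
    (hv : ∑ i, v i = 0) {c : ℝ} (horth : (v - c • k) ⬝ᵥ k = 0) :
    ∑ i, v i ^ 2 ≤ (Fintype.card n + 1) * ∑ i, (v - c • k) i ^ 2 := by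
  set w := v - c • k with hw
  have hc : c = -∑ i, w i := by
    simp only [hw, Pi.sub_apply, Pi.smul_apply, smul_eq_mul, Finset.sum_sub_distrib,
      ← Finset.mul_sum, hv, hk.2]
    ring
  have hvw : ∑ i, v i ^ 2 = ∑ i, w i ^ 2 + c ^ 2 * ∑ i, k i ^ 2 := by
    have hwk : ∑ i, w i * k i = 0 := horth
    have hvi : ∀ i, v i ^ 2 = w i ^ 2 + 2 * c * (w i * k i) + c ^ 2 * k i ^ 2 := fun i => by
      simp only [hw, Pi.sub_apply, Pi.smul_apply, smul_eq_mul]; ring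
    simp only [hvi, Finset.sum_add_distrib, ← Finset.mul_sum, hwk]
    ring
  have hk2 : ∑ i, k i ^ 2 ≤ 1 := hk.2 ▸ Finset.sum_le_sum fun i _ => by
    have := mem_Icc_of_mem_stdSimplex hk i
    nlinarith [this.1, this.2]
  have hcw : c ^ 2 ≤ Fintype.card n * ∑ i, w i ^ 2 := by
    simpa [hc] using sq_sum_le_card_mul_sum_sq (s := Finset.univ) (f := w)
  nlinarith [mul_le_of_le_one_right (sq_nonneg c) hk2]

end QuadraticForm

section SpectralGap

variable {n : Type*} [Fintype n] {A : Matrix n n ℝ} {k : n → ℝ} {α : ℝ}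

theorem mul_sum_sq_le_of_sum_eq_zero (hA : A.IsSymm) (hk : k ∈ stdSimplex ℝ n)
    (hAk : A *ᵥ k = 0) (hα : 0 ≤ α)
    (hgap : ∀ w : n → ℝ, w ⬝ᵥ k = 0 → α * ∑ i, w i ^ 2 ≤ w ⬝ᵥ A *ᵥ w)
    {v : n → ℝ} (hv : ∑ i, v i = 0) :
    α * ∑ i, v i ^ 2 ≤ (Fintype.card n + 1) * (v ⬝ᵥ A *ᵥ v) := by
  have hkk : k ⬝ᵥ k ≠ 0 := fun h0 => by
    have : k = 0 := dotProduct_self_eq_zero.mp h0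
    simpa [this] using hk.2
  set c := (v ⬝ᵥ k) / (k ⬝ᵥ k)
  have horth : (v - c • k) ⬝ᵥ k = 0 := by
    rw [sub_dotProduct, smul_dotProduct, smul_eq_mul, div_mul_cancel₀ _ hkk, sub_self]
  have hquad : (v - c • k) ⬝ᵥ A *ᵥ (v - c • k) = v ⬝ᵥ A *ᵥ v := by
    rw [sub_eq_add_neg, ← neg_smul, dotProduct_mulVec_add_smul_of_mulVec_eq_zero hA hAk]
  calc α * ∑ i, v i ^ 2
      ≤ α * ((Fintype.card n + 1) * ∑ i, (v - c • k) i ^ 2) :=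
        mul_le_mul_of_nonneg_left (sum_sq_le_card_add_one_mul_of_sum_eq_zero hk hv horth) hα
    _ = (Fintype.card n + 1) * (α * ∑ i, (v - c • k) i ^ 2) := by ring
    _ ≤ (Fintype.card n + 1) * (v ⬝ᵥ A *ᵥ v) := by
        rw [← hquad]; gcongr; exact hgap _ horth

theorem mul_sum_sq_sub_le_of_isMinOn (hA : A.IsSymm) (hk : k ∈ stdSimplex ℝ n)
    (hAk : A *ᵥ k = 0) (hα : 0 ≤ α)
    (hgap : ∀ w : n → ℝ, w ⬝ᵥ k = 0 → α * ∑ i, w i ^ 2 ≤ w ⬝ᵥ A *ᵥ w)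
    {B : Matrix n n ℝ} {x : n → ℝ} (hx : x ∈ stdSimplex ℝ n)
    (hmin : IsMinOn (fun y => y ⬝ᵥ B *ᵥ y) (stdSimplex ℝ n) x) :
    α * ∑ i, (x i - k i) ^ 2 ≤ 2 * (Fintype.card n + 1) * ∑ i, ∑ j, |A i j - B i j| := by
  have hv : ∑ i, (x - k) i = 0 := by
    simp only [Pi.sub_apply, Finset.sum_sub_distrib, hx.2, hk.2, sub_self]
  have hquad : (x - k) ⬝ᵥ A *ᵥ (x - k) = x ⬝ᵥ A *ᵥ x := by
    rw [sub_eq_add_neg, ← neg_one_smul ℝ k, dotProduct_mulVec_add_smul_of_mulVec_eq_zero hA hAk]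
  have hperturb := dotProduct_mulVec_le_add_of_le_of_mem_stdSimplex (A := A) hx hk
    (isMinOn_iff.mp hmin k hk)
  rw [hAk, dotProduct_zero, zero_add] at hperturb
  calc α * ∑ i, (x i - k i) ^ 2 ≤ (Fintype.card n + 1) * ((x - k) ⬝ᵥ A *ᵥ (x - k)) :=
        mul_sum_sq_le_of_sum_eq_zero hA hk hAk hα hgap hv
    _ = (Fintype.card n + 1) * (x ⬝ᵥ A *ᵥ x) := by rw [hquad]
    _ ≤ 2 * (Fintype.card n + 1) * ∑ i, ∑ j, |A i j - B i j| := by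
        rw [mul_comm 2, mul_assoc]; gcongr

end SpectralGap

theorem integral_sum_le_card_mul {W ι : Type*} [MeasurableSpace W] {μ : Measure W}
    [Fintype ι] {f : ι → W → ℝ} (hf : ∀ i, Integrable (f i) μ) {Q : ℝ}
    (hQ : ∀ i, ∫ ω, f i ω ∂μ ≤ Q) : ∫ ω, ∑ i, f i ω ∂μ ≤ Fintype.card ι * Q := by
  rw [integral_finsetSum _ fun i _ => hf i]
  exact (Finset.sum_le_sum fun i _ => hQ i).trans (by simp)

theorem expected_coefficient_recovery_bound_general
    {m : ℕ}
    (M : Matrix (Fin m) (Fin m) ℝ) (hMsymm : M.IsSymm)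
    (lamStar : Fin m → ℝ) (hstar0 : ∀ j, 0 ≤ lamStar j) (hstar1 : ∑ j, lamStar j = 1)
    (hker : M.mulVec lamStar = 0)
    (α₂ : ℝ) (hα : 0 < α₂)
    (hgap : ∀ v : Fin m → ℝ, v ⬝ᵥ lamStar = 0 →
      α₂ * ∑ i, v i ^ 2 ≤ v ⬝ᵥ M.mulVec v)
    {W : Type*} [MeasurableSpace W] (P : Measure W)
    (Mhat : W → Matrix (Fin m) (Fin m) ℝ)
    (Q : ℝ)
    (hQint : ∀ i j, Integrable (fun ω => |M i j - Mhat ω i j|) P)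
    (hQ : ∀ i j, ∫ ω, |M i j - Mhat ω i j| ∂P ≤ Q)
    (lamHat : W → Fin m → ℝ)
    (hlamHat0 : ∀ ω j, 0 ≤ lamHat ω j) (hlamHat1 : ∀ ω, ∑ j, lamHat ω j = 1)
    (hmin : ∀ ω, ∀ lam : Fin m → ℝ, (∀ j, 0 ≤ lam j) → ∑ j, lam j = 1 →
      lamHat ω ⬝ᵥ (Mhat ω).mulVec (lamHat ω) ≤ lam ⬝ᵥ (Mhat ω).mulVec lam) :
    ∫ ω, ∑ i, (lamHat ω i - lamStar i) ^ 2 ∂P ≤ 8 * m ^ 3 * Q / α₂ := by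
  obtain ⟨i₀⟩ : Nonempty (Fin m) := by
    by_contra h
    simp [not_nonempty_iff.mp h] at hstar1
  have hm : (1 : ℝ) ≤ m := by exact_mod_cast Fin.pos i₀
  have hQ0 : 0 ≤ Q := (integral_nonneg fun _ => abs_nonneg _).trans (hQ i₀ i₀)
  set S := fun ω => ∑ i, ∑ j, |M i j - Mhat ω i j|
  have hrow : ∀ i, Integrable (fun ω => ∑ j, |M i j - Mhat ω i j|) P :=
    fun i => integrable_finsetSum _ fun j _ => hQint i j
  have hSint : Integrable S P := integrable_finsetSum _ fun i _ => hrow i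
  have hS : ∫ ω, S ω ∂P ≤ m * (m * Q) := by
    simpa using integral_sum_le_card_mul hrow fun i => by
      simpa using integral_sum_le_card_mul (hQint i) (hQ i)
  have hpointwise : ∀ ω, ∑ i, (lamHat ω i - lamStar i) ^ 2 ≤ 2 * (m + 1) / α₂ * S ω := fun ω => by
    rw [div_mul_eq_mul_div, le_div_iff₀ hα, mul_comm]
    simpa using mul_sum_sq_sub_le_of_isMinOn hMsymm ⟨hstar0, hstar1⟩ hker hα.le hgap
      ⟨hlamHat0 ω, hlamHat1 ω⟩ (isMinOn_iff.mpr fun y hy => hmin ω y hy.1 hy.2)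
  calc ∫ ω, ∑ i, (lamHat ω i - lamStar i) ^ 2 ∂P
      ≤ ∫ ω, 2 * (m + 1) / α₂ * S ω ∂P :=
        integral_mono_of_nonneg (ae_of_all _ fun ω => by positivity) (hSint.const_mul _)
          (ae_of_all _ hpointwise)
    _ = 2 * (m + 1) / α₂ * ∫ ω, S ω ∂P := integral_const_mul _ _
    _ ≤ 2 * (m + 1) / α₂ * (m * (m * Q)) := by gcongr
    _ ≤ 8 * m ^ 3 * Q / α₂ := by
        rw [div_mul_eq_mul_div]
        refine div_le_div_of_nonneg_right ?_ hα.le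
        nlinarith [mul_nonneg (mul_nonneg (sq_nonneg (m : ℝ)) hQ0) (sub_nonneg.mpr hm)]

/-- Expected coefficient-recovery bound: if `M` is PSD with kernel spanned by
`λ* ∈ Δ^m` and spectral gap `α₂`, `M̂` is a random PSD matrix whose entries
approximate those of `M` in expectation within `Q`, and `λ̂(ω)` minimizes the
quadratic form of `M̂(ω)` over the simplex, then `E‖λ̂ − λ*‖² ≤ 8 m³ Q / α₂`. -/
theorem expected_coefficient_recovery_bound
    {m : ℕ}
    (M : Matrix (Fin m) (Fin m) ℝ) (hMsymm : M.IsSymm) (hMpsd : M.PosSemidef)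
    (lamStar : Fin m → ℝ) (hstar0 : ∀ j, 0 ≤ lamStar j) (hstar1 : ∑ j, lamStar j = 1)
    (hker : M.mulVec lamStar = 0)
    (α₂ : ℝ) (hα : 0 < α₂)
    (hgap : ∀ v : Fin m → ℝ, v ⬝ᵥ lamStar = 0 →
      α₂ * ∑ i, v i ^ 2 ≤ v ⬝ᵥ M.mulVec v)
    {W : Type*} [MeasurableSpace W] (P : Measure W) [IsProbabilityMeasure P]
    (Mhat : W → Matrix (Fin m) (Fin m) ℝ)
    (hMhatMeas : ∀ i j, Measurable (fun ω => Mhat ω i j))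
    (hMhatSymm : ∀ ω, (Mhat ω).IsSymm) (hMhatPsd : ∀ ω, (Mhat ω).PosSemidef)
    (Q : ℝ)
    (hQint : ∀ i j, Integrable (fun ω => |M i j - Mhat ω i j|) P)
    (hQ : ∀ i j, ∫ ω, |M i j - Mhat ω i j| ∂P ≤ Q)
    (lamHat : W → Fin m → ℝ) (hlamHatMeas : ∀ j, Measurable (fun ω => lamHat ω j))
    (hlamHat0 : ∀ ω j, 0 ≤ lamHat ω j) (hlamHat1 : ∀ ω, ∑ j, lamHat ω j = 1)
    (hmin : ∀ ω, ∀ lam : Fin m → ℝ, (∀ j, 0 ≤ lam j) → ∑ j, lam j = 1 →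
      lamHat ω ⬝ᵥ (Mhat ω).mulVec (lamHat ω) ≤ lam ⬝ᵥ (Mhat ω).mulVec lam) :
    ∫ ω, ∑ i, (lamHat ω i - lamStar i) ^ 2 ∂P ≤ 8 * m ^ 3 * Q / α₂ :=
  expected_coefficient_recovery_bound_general M hMsymm lamStar hstar0 hstar1 hker α₂ hα hgap P Mhat
    Q hQint hQ lamHat hlamHat0 hlamHat1 hmin
end

section
/- Let M, M̂ ∈ ℝ^{m×m} be symmetric positive semidefinite matrices, suppose Mλ* = 0 for some λ* ∈ Δ^m, suppose α₂ > 0 satisfies vᵀMv ≥ α₂‖v‖² for every v ∈ ℝ^m orthogonal to λ*, and suppose |M_{ij} − M̂_{ij}| ≤ Q for all 1 ≤ i,j ≤ m. If λ̂ ∈ Δ^m satisfies λ̂ᵀ M̂ λ̂ ≤ λᵀ M̂ λ for every λ ∈ Δ^m, then ‖λ̂ − λ*‖²₂ ≤ 8·m³·Q/α₂. -/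
/-!
Perturbing the entries of `M` by at most `Q` changes its quadratic form on the simplex by at
most `Q`, so the minimiser `λ̂` of `M̂` has energy `λ̂ᵀ M λ̂ ≤ λ*ᵀ M̂ λ* + Q ≤ 2Q`. Split
`λ̂ - λ* = w + t λ*` with `w ⊥ λ*`. Since `M` is symmetric and `M λ* = 0`, the
energy of `w` is that of `λ̂`, and the spectral gap gives `α₂ ‖w‖² ≤ 2Q`. Because `λ̂ - λ*` has
zero coordinate sum, `t = -∑ wᵢ`, so `t² ≤ m ‖w‖²`, and `‖λ*‖ ≤ 1` gives
`‖λ̂ - λ*‖² ≤ (m + 1) ‖w‖² ≤ 2 (m + 1) Q / α₂ ≤ 8 m³ Q / α₂`.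
-/

open Matrix

variable {ι R : Type*} [Fintype ι]

theorem dotProduct_mulVec_le_of_forall_apply_le [CommRing R] [LinearOrder R]
    [IsStrictOrderedRing R] {A : Matrix ι ι R} {Q : R} (hA : ∀ i j, A i j ≤ Q) {x : ι → R}
    (hx : x ∈ stdSimplex R ι) :
    x ⬝ᵥ A *ᵥ x ≤ Q :=
  calc x ⬝ᵥ A *ᵥ x = ∑ i, ∑ j, x i * A i j * x j := by
        simp only [dotProduct, mulVec, Finset.mul_sum, mul_assoc]
    _ ≤ ∑ i, ∑ j, x i * Q * x j := by
        gcongr with i _ j _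
        exacts [hx.1 j, hx.1 i, hA i j]
    _ = Q := by
        simp only [mul_comm _ Q, mul_assoc, ← Finset.mul_sum, hx.2, mul_one]

theorem dotProduct_mulVec_le_add_of_abs_sub_le [CommRing R] [LinearOrder R]
    [IsStrictOrderedRing R] {A B : Matrix ι ι R} {Q : R} (hAB : ∀ i j, |A i j - B i j| ≤ Q)
    {x y : ι → R} (hx : x ∈ stdSimplex R ι) (hy : y ∈ stdSimplex R ι)
    (hxy : x ⬝ᵥ B *ᵥ x ≤ y ⬝ᵥ B *ᵥ y) :
    x ⬝ᵥ A *ᵥ x ≤ y ⬝ᵥ A *ᵥ y + 2 * Q := by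
  have hxAB := dotProduct_mulVec_le_of_forall_apply_le (A := A - B)
    (fun i j => (le_abs_self _).trans (hAB i j)) hx
  have hyBA := dotProduct_mulVec_le_of_forall_apply_le (A := B - A)
    (fun i j => (le_abs_self _).trans ((abs_sub_comm _ _).trans_le (hAB i j))) hy
  simp only [sub_mulVec, dotProduct_sub] at hxAB hyBA
  linarith

theorem Matrix.IsSymm.dotProduct_mulVec_add_of_mulVec_eq_zero [CommRing R] {A : Matrix ι ι R}
    (hA : A.IsSymm) {u : ι → R} (hu : A *ᵥ u = 0) (x : ι → R) :
    (x + u) ⬝ᵥ A *ᵥ (x + u) = x ⬝ᵥ A *ᵥ x := by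
  have hu' : u ⬝ᵥ A *ᵥ x = 0 := by
    rw [dotProduct_mulVec, ← mulVec_transpose, hA.eq, hu, zero_dotProduct]
  rw [mulVec_add, hu, add_zero, add_dotProduct, hu', add_zero]

theorem exists_eq_add_smul_and_dotProduct_eq_zero [Field R] {u : ι → R} (hu : u ⬝ᵥ u ≠ 0)
    (v : ι → R) : ∃ (t : R) (w : ι → R), v = w + t • u ∧ w ⬝ᵥ u = 0 := by
  refine ⟨v ⬝ᵥ u / (u ⬝ᵥ u), v - (v ⬝ᵥ u / (u ⬝ᵥ u)) • u, by abel, ?_⟩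
  rw [sub_dotProduct, smul_dotProduct, smul_eq_mul, div_mul_cancel₀ _ hu, sub_self]

theorem sum_sq_add_smul_le_card_add_one_mul [Field R] [LinearOrder R] [IsStrictOrderedRing R]
    {u w : ι → R} (hu : u ∈ stdSimplex R ι) (hwu : w ⬝ᵥ u = 0) {t : R}
    (hsum : ∑ i, (w + t • u) i = 0) :
    ∑ i, (w + t • u) i ^ 2 ≤ (Fintype.card ι + 1) * ∑ i, w i ^ 2 := by
  have hpyth : ∑ i, (w + t • u) i ^ 2 = ∑ i, w i ^ 2 + t ^ 2 * ∑ i, u i ^ 2 := by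
    simp only [Pi.add_apply, Pi.smul_apply, smul_eq_mul, add_sq, Finset.sum_add_distrib]
    simp only [dotProduct] at hwu
    simp only [mul_pow, ← Finset.mul_sum, mul_assoc, mul_left_comm _ t, ← Finset.mul_sum, hwu]
    ring
  have hu2 : ∑ i, u i ^ 2 ≤ 1 := by
    simpa [hu.2] using Finset.sum_sq_le_sq_sum_of_nonneg (s := Finset.univ) fun i _ => hu.1 i
  have ht : t = -∑ i, w i := by
    simp only [Pi.add_apply, Pi.smul_apply, smul_eq_mul, Finset.sum_add_distrib, ← Finset.mul_sum,
      hu.2] at hsum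
    linarith
  have hcs : t ^ 2 ≤ Fintype.card ι * ∑ i, w i ^ 2 := by
    simpa [ht] using sq_sum_le_card_mul_sum_sq (s := Finset.univ) (f := w)
  rw [hpyth]
  nlinarith [sq_nonneg t]

theorem coefficient_recovery_bound_general
    {m : ℕ}
    (M Mhat : Matrix (Fin m) (Fin m) ℝ)
    (hMsymm : M.IsSymm)
    (lamStar : Fin m → ℝ) (hstar0 : ∀ j, 0 ≤ lamStar j) (hstar1 : ∑ j, lamStar j = 1)
    (hker : M.mulVec lamStar = 0)
    (α₂ : ℝ) (hα : 0 < α₂)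
    (hgap : ∀ v : Fin m → ℝ, v ⬝ᵥ lamStar = 0 →
      α₂ * ∑ i, v i ^ 2 ≤ v ⬝ᵥ M.mulVec v)
    (Q : ℝ) (hQ : ∀ i j, |M i j - Mhat i j| ≤ Q)
    (lamHat : Fin m → ℝ) (hhat0 : ∀ j, 0 ≤ lamHat j) (hhat1 : ∑ j, lamHat j = 1)
    (hmin : ∀ lam : Fin m → ℝ, (∀ j, 0 ≤ lam j) → ∑ j, lam j = 1 →
      lamHat ⬝ᵥ Mhat.mulVec lamHat ≤ lam ⬝ᵥ Mhat.mulVec lam) :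
    ∑ i, (lamHat i - lamStar i) ^ 2 ≤ 8 * m ^ 3 * Q / α₂ := by
  have hm : (1 : ℝ) ≤ m := by
    rcases m with _ | m
    · simp at hstar1
    · simp
  have hstar_ne : lamStar ⬝ᵥ lamStar ≠ 0 := by
    rintro h
    simp [dotProduct_self_eq_zero.mp h] at hstar1
  obtain ⟨t, w, hvw, hw⟩ :=
    exists_eq_add_smul_and_dotProduct_eq_zero hstar_ne (lamHat - lamStar)
  have henergy : lamHat ⬝ᵥ M *ᵥ lamHat ≤ 2 * Q := by
    simpa [hker] using dotProduct_mulVec_le_add_of_abs_sub_le hQ ⟨hhat0, hhat1⟩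
      ⟨hstar0, hstar1⟩ (hmin lamStar hstar0 hstar1)
  have hwM : w ⬝ᵥ M *ᵥ w = lamHat ⬝ᵥ M *ᵥ lamHat := by
    have hw_eq : w = lamHat + (-(1 + t)) • lamStar := by
      rw [eq_sub_of_add_eq hvw.symm]; module
    rw [hw_eq, hMsymm.dotProduct_mulVec_add_of_mulVec_eq_zero
      (by rw [mulVec_smul, hker, smul_zero])]
  have hw_le : ∑ i, w i ^ 2 ≤ 2 * Q / α₂ := by
    rw [le_div_iff₀' hα]
    exact (hgap w hw).trans (hwM ▸ henergy)
  have hproj := sum_sq_add_smul_le_card_add_one_mul ⟨hstar0, hstar1⟩ hw (t := t)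
    (by rw [← hvw]; simp [Finset.sum_sub_distrib, hstar1, hhat1])
  rw [← hvw, Fintype.card_fin] at hproj
  have hbound_nonneg : 0 ≤ 2 * Q / α₂ :=
    (Finset.sum_nonneg fun i _ => sq_nonneg (w i)).trans hw_le
  calc ∑ i, (lamHat i - lamStar i) ^ 2 ≤ (m + 1) * (2 * Q / α₂) := hproj.trans (by gcongr)
    _ ≤ 4 * m ^ 3 * (2 * Q / α₂) := by
        gcongr
        nlinarith [one_le_pow₀ (n := 2) hm]
    _ = 8 * m ^ 3 * Q / α₂ := by ring

/-- Deterministic coefficient-recovery bound: if `M` is PSD with kernel spanned by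
`λ* ∈ Δ^m` and spectral gap `α₂`, `M̂` is PSD with `|M_{ij} − M̂_{ij}| ≤ Q`, and
`λ̂` minimizes the quadratic form of `M̂` over the simplex, then
`‖λ̂ − λ*‖² ≤ 8 m³ Q / α₂`. -/
theorem coefficient_recovery_bound
    {m : ℕ}
    (M Mhat : Matrix (Fin m) (Fin m) ℝ)
    (hMsymm : M.IsSymm) (hMpsd : M.PosSemidef)
    (hMhatSymm : Mhat.IsSymm) (hMhatPsd : Mhat.PosSemidef)
    (lamStar : Fin m → ℝ) (hstar0 : ∀ j, 0 ≤ lamStar j) (hstar1 : ∑ j, lamStar j = 1)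
    (hker : M.mulVec lamStar = 0)
    (α₂ : ℝ) (hα : 0 < α₂)
    (hgap : ∀ v : Fin m → ℝ, v ⬝ᵥ lamStar = 0 →
      α₂ * ∑ i, v i ^ 2 ≤ v ⬝ᵥ M.mulVec v)
    (Q : ℝ) (hQ : ∀ i j, |M i j - Mhat i j| ≤ Q)
    (lamHat : Fin m → ℝ) (hhat0 : ∀ j, 0 ≤ lamHat j) (hhat1 : ∑ j, lamHat j = 1)
    (hmin : ∀ lam : Fin m → ℝ, (∀ j, 0 ≤ lam j) → ∑ j, lam j = 1 →
      lamHat ⬝ᵥ Mhat.mulVec lamHat ≤ lam ⬝ᵥ Mhat.mulVec lam) :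
    ∑ i, (lamHat i - lamStar i) ^ 2 ≤ 8 * m ^ 3 * Q / α₂ :=
  coefficient_recovery_bound_general M Mhat hMsymm lamStar hstar0 hstar1 hker α₂ hα hgap Q hQ lamHat
    hhat0 hhat1 hmin
end
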